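/- arXiv:math/0609184 — 13 statements merged into one kernel-verified Lean document; each statement's English description precedes it below -/
import Mathlib

section
/- For every n ≥ 1, in the polynomial ring ℤ[t] one has ∑_{w ∈ S_n} t^{des(w)} = ∑_{w ∈ Ŝ_n} t^{des(w)} · (1+t)^{n−1−2·des(w)}. (Equivalently, the Eulerian polynomial A_n(t), which is the h-polynomial of the (n−1)-dimensional permutohedron, has γ-expansion with γ_r equal to the number of permutations in Ŝ_n with r descents.) -/
open Classical Polynomial

/-- Number of descents of a permutation `w` of `Fin n`: indices `i` with
`w(i) > w(i+1)` (0-indexed positions `i` with `i+1 < n`). -/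
def des {n : ℕ} (w : Equiv.Perm (Fin n)) : ℕ :=
  (Finset.univ.filter fun i : Fin n =>
    ∃ j : Fin n, (j : ℕ) = (i : ℕ) + 1 ∧ w j < w i).card

/-- `w` has no final descent: it is not the case that `w(n-1) > w(n)`
(1-indexed), i.e. the last two entries do not descend. -/
def NoFinalDescent {n : ℕ} (w : Equiv.Perm (Fin n)) : Prop :=
  ∀ i j : Fin n, (i : ℕ) + 1 = (j : ℕ) → (j : ℕ) + 1 = n → ¬ w j < w i

/-- `w` has no double descent: no `i` with `w(i) > w(i+1) > w(i+2)`. -/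
def NoDoubleDescent {n : ℕ} (w : Equiv.Perm (Fin n)) : Prop :=
  ∀ i j k : Fin n, (i : ℕ) + 1 = (j : ℕ) → (j : ℕ) + 1 = (k : ℕ) →
    ¬ (w j < w i ∧ w k < w j)

/-!
Cut a word at its smallest letter `m`, writing it as `a ++ m :: b`. Since `m` is smaller than
every other letter, the descents of the word are those of `a` and of `b`, plus one when `a` is
nonempty. The word has no final descent and no double descent exactly when `a` and `b` have
neither and `a` is empty whenever `b` is. So, as functions `F` of the set of letters, both sides
satisfy `F (insert m E) = (1 + t) F E + t ∑ F A * F (E \ A)`, summed over the nonempty proper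
subsets `A` of `E`. Together with `F {m} = 1`, this recursion determines `F`.
-/

namespace Finset

variable {α : Type*} {V : Finset α} {l : List α}

def lists (V : Finset α) : Finset (List α) := ⟨V.val.lists, Multiset.lists_nodup_finset V⟩

theorem mem_lists : l ∈ V.lists ↔ V.val = l := Multiset.mem_lists_iff _ _

theorem nodup_of_mem_lists (h : l ∈ V.lists) : l.Nodup := by
  rw [mem_lists] at h
  exact Multiset.coe_nodup.1 (h ▸ V.nodup)

theorem mem_of_mem_lists (h : l ∈ V.lists) {x : α} : x ∈ l ↔ x ∈ V := by
  rw [mem_lists] at h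
  rw [← mem_val, h, Multiset.mem_coe]

theorem length_of_mem_lists (h : l ∈ V.lists) : l.length = #V := by
  rw [mem_lists] at h
  rw [card, h, Multiset.coe_card]

theorem eq_nil_iff_of_mem_lists (h : l ∈ V.lists) : l = [] ↔ V = ∅ := by
  rw [← List.length_eq_zero_iff, length_of_mem_lists h, card_eq_zero]

theorem mem_lists_iff_nodup [DecidableEq α] : l ∈ V.lists ↔ l.Nodup ∧ ∀ x, x ∈ l ↔ x ∈ V := by
  refine ⟨fun h => ⟨nodup_of_mem_lists h, fun _ => mem_of_mem_lists h⟩, fun ⟨hl, hV⟩ => ?_⟩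
  rw [mem_lists, Multiset.Nodup.ext V.nodup (Multiset.coe_nodup.2 hl)]
  simp [hV]

@[simp] theorem lists_empty : (∅ : Finset α).lists = {[]} := by
  ext l
  simp [mem_lists, eq_comm]

theorem lists_singleton (a : α) : ({a} : Finset α).lists = {[a]} := by
  ext l
  rw [mem_lists, mem_singleton, singleton_val, eq_comm, Multiset.coe_eq_singleton]

theorem sum_lists_eq_sum_powerset [DecidableEq α] {M : Type*} [AddCommMonoid M]
    {m : α} (hm : m ∈ V) (f : List α → M) :
    ∑ l ∈ V.lists, f l = ∑ A ∈ (V.erase m).powerset, ∑ a ∈ A.lists, ∑ b ∈ (V.erase m \ A).lists,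
      f (a ++ m :: b) := by
  have hV : V.val = m ::ₘ (V.erase m).val := by rw [erase_val, Multiset.cons_erase hm]
  simp_rw [← sum_product']
  rw [sum_sigma']
  symm
  refine sum_bij (fun p _ => p.2.1 ++ m :: p.2.2) ?_ ?_ ?_ (fun _ _ => rfl)
  · rintro ⟨A, a, b⟩ hp
    simp only [mem_sigma, mem_powerset, mem_product, mem_lists] at hp ⊢
    obtain ⟨hA, ha, hb⟩ := hp
    rw [hV, ← Multiset.coe_add, ← Multiset.cons_coe, Multiset.add_cons, ← ha, ← hb, sdiff_val,
      add_tsub_cancel_of_le (val_le_iff.2 hA)]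
  · rintro ⟨A, a, b⟩ hp ⟨A', a', b'⟩ hp' h
    simp only [mem_sigma, mem_powerset, mem_product] at hp hp' h
    have hma : m ∉ a := fun h => by simpa using hp.1 ((mem_of_mem_lists hp.2.1).1 h)
    have hmb : m ∉ b := fun h => by simpa using (mem_sdiff.1 ((mem_of_mem_lists hp.2.2).1 h)).1
    obtain ⟨rfl, -, rfl⟩ := (List.append_cons_inj_of_notMem hma hmb).1 h
    obtain rfl : A = A' := val_inj.1 ((mem_lists.1 hp.2.1).trans (mem_lists.1 hp'.2.1).symm)
    rfl
  · intro l hl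
    obtain ⟨a, b, rfl⟩ := List.append_of_mem ((mem_of_mem_lists hl).2 hm)
    have hE : (V.erase m).val = a + b := by
      have h := (mem_lists.1 hl).symm.trans hV
      rwa [← Multiset.coe_add, ← Multiset.cons_coe, Multiset.add_cons, Multiset.cons_inj_right,
        eq_comm] at h
    have hA : a.toFinset.val = a := by
      rw [List.toFinset_val,
        List.Nodup.dedup ((nodup_of_mem_lists hl).sublist (List.sublist_append_left _ _))]
    refine ⟨⟨a.toFinset, a, b⟩, ?_, rfl⟩
    simp only [mem_sigma, mem_powerset, mem_product, mem_lists]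
    refine ⟨val_le_iff.1 (hE ▸ hA ▸ Multiset.le_add_right _ _), hA, ?_⟩
    rw [sdiff_val, hE, hA, add_tsub_cancel_left]

theorem sum_powerset_eq_add_add_sum [DecidableEq α] {M : Type*} [AddCommMonoid M]
    {E : Finset α} (hE : E.Nonempty) (g : Finset α → M) :
    ∑ A ∈ E.powerset, g A = g ∅ + g E + ∑ A ∈ E.powerset with A.Nonempty ∧ A ≠ E, g A := by
  rw [← sum_filter_not_add_sum_filter _ (fun A => A.Nonempty ∧ A ≠ E)]
  have hends : {A ∈ E.powerset | ¬(A.Nonempty ∧ A ≠ E)} = {∅, E} := by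
    ext A
    simp only [mem_filter, mem_powerset, mem_insert, mem_singleton, not_and_or,
      not_nonempty_iff_eq_empty, not_ne_iff]
    constructor
    · exact fun h => h.2
    · rintro (rfl | rfl) <;> simp
  rw [hends, sum_pair hE.ne_empty.symm]

end Finset

namespace List

variable {α : Type*} [LinearOrder α]

def des : List α → ℕ
  | x :: y :: l => (if y < x then 1 else 0) + des (y :: l)
  | _ => 0

def NoFinalDescent : List α → Prop
  | [x, y] => ¬ y < x
  | _ :: y :: z :: l => NoFinalDescent (y :: z :: l)
  | _ => True

def NoDoubleDescent : List α → Prop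
  | x :: y :: z :: l => ¬ (y < x ∧ z < y) ∧ NoDoubleDescent (y :: z :: l)
  | _ => True

@[simp] theorem des_nil : ([] : List α).des = 0 := rfl

@[simp] theorem des_singleton (x : α) : [x].des = 0 := rfl

theorem noFinalDescent_cons_cons {x y : α} {l : List α} :
    (x :: y :: l).NoFinalDescent ↔ (l = [] → ¬ y < x) ∧ (y :: l).NoFinalDescent := by
  cases l <;> simp [NoFinalDescent]

theorem NoFinalDescent.of_cons {x : α} :
    ∀ {l : List α}, (x :: l).NoFinalDescent → l.NoFinalDescent
  | [], _ | [_], _ => trivial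
  | _ :: _ :: _, h => h

theorem NoDoubleDescent.of_cons {x : α} :
    ∀ {l : List α}, (x :: l).NoDoubleDescent → l.NoDoubleDescent
  | [], _ | [_], _ | [_, _], _ => trivial
  | _ :: _ :: _ :: _, h => h.2

theorem two_mul_des_add_one_le_length : ∀ {l : List α}, l ≠ [] → l.NoFinalDescent →
    l.NoDoubleDescent → 2 * l.des + 1 ≤ l.length
  | [_], _, _, _ => by simp
  | [x, y], _, hf, _ => by simp [des, show ¬ y < x from hf]
  | x :: y :: z :: l, _, hf, hd => by
    by_cases hyx : y < x
    · have hzy : ¬ z < y := fun h => hd.1 ⟨hyx, h⟩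
      have := two_mul_des_add_one_le_length (l := z :: l) (by simp) hf.of_cons.of_cons
        hd.2.of_cons
      simp only [des, hyx, hzy, if_true, if_false, length_cons] at this ⊢
      omega
    · have := two_mul_des_add_one_le_length (l := y :: z :: l) (by simp) hf hd.2
      simp only [des, hyx, if_false, length_cons] at this ⊢
      omega

section SplitAtMin

variable {m : α} {a b : List α}

theorem des_cons_of_lt : ∀ {b : List α}, (∀ y ∈ b, m < y) → (m :: b).des = b.des
  | [], _ => rfl
  | y :: b, hb => by simp [des, (hb y mem_cons_self).not_gt]

theorem des_append_cons_of_lt (ha : ∀ y ∈ a, m < y) (hb : ∀ y ∈ b, m < y) :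
    (a ++ m :: b).des = a.des + b.des + if a = [] then 0 else 1 := by
  induction a with
  | nil => simp [des_cons_of_lt hb]
  | cons x a ih =>
    have ih' := ih fun z hz => ha z (mem_cons_of_mem _ hz)
    cases a with
    | nil => simp [des, des_cons_of_lt hb, ha x mem_cons_self, add_comm]
    | cons y a =>
      simp only [cons_append, des, reduceCtorEq, if_false] at ih' ⊢
      omega

theorem noFinalDescent_cons_of_lt : ∀ {b : List α}, (∀ y ∈ b, m < y) →
    ((m :: b).NoFinalDescent ↔ b.NoFinalDescent)
  | [], _ => Iff.rfl
  | [y], hb => by simp [NoFinalDescent, (hb y mem_cons_self).not_gt]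
  | _ :: _ :: _, _ => Iff.rfl

theorem noFinalDescent_append_cons_of_lt (ha : ∀ y ∈ a, m < y) (hb : ∀ y ∈ b, m < y) :
    (a ++ m :: b).NoFinalDescent ↔ (b = [] → a = []) ∧ b.NoFinalDescent := by
  induction a with
  | nil => simp [noFinalDescent_cons_of_lt hb]
  | cons x a ih =>
    cases a with
    | nil =>
      cases b with
      | nil => simp [NoFinalDescent, ha x mem_cons_self]
      | cons y b => simpa [NoFinalDescent] using noFinalDescent_cons_of_lt hb
    | cons y a =>
      rw [cons_append, cons_append, noFinalDescent_cons_cons, ← cons_append,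
        ih fun z hz => ha z (mem_cons_of_mem _ hz)]
      simp

theorem noDoubleDescent_cons_of_lt : ∀ {b : List α}, (∀ y ∈ b, m < y) →
    ((m :: b).NoDoubleDescent ↔ b.NoDoubleDescent)
  | [], _ | [_], _ => Iff.rfl
  | y :: _ :: _, hb => by simp [NoDoubleDescent, (hb y mem_cons_self).not_gt]

theorem noDoubleDescent_append_cons_of_lt (ha : ∀ y ∈ a, m < y) (hb : ∀ y ∈ b, m < y) :
    (a ++ m :: b).NoDoubleDescent ↔
      a.NoDoubleDescent ∧ a.NoFinalDescent ∧ b.NoDoubleDescent := by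
  induction a with
  | nil => simp [noDoubleDescent_cons_of_lt hb, NoDoubleDescent, NoFinalDescent]
  | cons x a ih =>
    have ih' := ih fun z hz => ha z (mem_cons_of_mem _ hz)
    cases a with
    | nil =>
      cases b with
      | nil => simp [NoDoubleDescent, NoFinalDescent]
      | cons y b =>
        simpa [NoDoubleDescent, NoFinalDescent, (hb y mem_cons_self).not_gt] using
          noDoubleDescent_cons_of_lt hb
    | cons y a =>
      cases a with
      | nil =>
        simp only [cons_append, nil_append, NoDoubleDescent, NoFinalDescent] at ih' ⊢
        rw [ih']
        have := (ha y (by simp)).not_gt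
        tauto
      | cons z a =>
        simp only [cons_append, NoDoubleDescent, NoFinalDescent] at ih' ⊢
        rw [ih']
        tauto

end SplitAtMin

open Finset in
theorem des_ofFn : ∀ {n : ℕ} (f : Fin n → α),
    (ofFn f).des = #{i : Fin n | ∃ j : Fin n, (j : ℕ) = i + 1 ∧ f j < f i}
  | 0, f => by simp
  | 1, f => by simp
  | n + 2, f => by
    have ih := des_ofFn (fun i : Fin (n + 1) => f i.succ)
    rw [ofFn_succ] at ih
    rw [ofFn_succ, ofFn_succ, Fin.card_filter_univ_succ', des, ih]
    congr 2 <;> simp [Fin.exists_fin_succ]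

theorem noFinalDescent_ofFn : ∀ {n : ℕ} (f : Fin n → α),
    (ofFn f).NoFinalDescent ↔ ∀ i j : Fin n, (i : ℕ) + 1 = j → (j : ℕ) + 1 = n → ¬ f j < f i
  | 0, f => by simp [NoFinalDescent]
  | 1, f => by simp [NoFinalDescent]
  | n + 2, f => by
    have ih := noFinalDescent_ofFn (fun i : Fin (n + 1) => f i.succ)
    rw [ofFn_succ] at ih
    rw [ofFn_succ, ofFn_succ, noFinalDescent_cons_cons, ih]
    simp [Fin.forall_fin_succ, eq_comm (a := 0)]

theorem noDoubleDescent_ofFn : ∀ {n : ℕ} (f : Fin n → α),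
    (ofFn f).NoDoubleDescent ↔ ∀ i j k : Fin n, (i : ℕ) + 1 = j → (j : ℕ) + 1 = k →
      ¬ (f j < f i ∧ f k < f j)
  | 0, f => by simp [NoDoubleDescent]
  | 1, f => by simp [NoDoubleDescent]
  | 2, f => by simp [NoDoubleDescent, Fin.forall_fin_succ]
  | n + 3, f => by
    have ih := noDoubleDescent_ofFn (fun i : Fin (n + 2) => f i.succ)
    rw [ofFn_succ, ofFn_succ] at ih
    rw [ofFn_succ, ofFn_succ, ofFn_succ, NoDoubleDescent, ih]
    simp [Fin.forall_fin_succ]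

section GammaWeight

variable {R : Type*} [CommSemiring R] (x : R) {m : α} {a b : List α}

noncomputable def gammaWeight (l : List α) : R :=
  if l.NoFinalDescent ∧ l.NoDoubleDescent then x ^ l.des * (1 + x) ^ (l.length - 1 - 2 * l.des)
  else 0

theorem gammaWeight_cons_of_lt (hb : ∀ y ∈ b, m < y) (hb₀ : b ≠ []) :
    (m :: b).gammaWeight x = (1 + x) * b.gammaWeight x := by
  simp only [gammaWeight, noFinalDescent_cons_of_lt hb, noDoubleDescent_cons_of_lt hb,
    des_cons_of_lt hb, length_cons]
  split_ifs with h
  · have := two_mul_des_add_one_le_length hb₀ h.1 h.2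
    rw [show b.length + 1 - 1 - 2 * b.des = (b.length - 1 - 2 * b.des) + 1 by omega, pow_succ]
    ring
  · rw [mul_zero]

theorem gammaWeight_append_singleton_of_lt (ha : ∀ y ∈ a, m < y) (ha₀ : a ≠ []) :
    (a ++ [m]).gammaWeight x = 0 := by
  rw [gammaWeight, noFinalDescent_append_cons_of_lt ha (by simp)]
  simp [ha₀]

theorem gammaWeight_append_cons_of_lt (ha : ∀ y ∈ a, m < y) (hb : ∀ y ∈ b, m < y)
    (ha₀ : a ≠ []) (hb₀ : b ≠ []) :
    (a ++ m :: b).gammaWeight x = x * a.gammaWeight x * b.gammaWeight x := by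
  simp only [gammaWeight, noFinalDescent_append_cons_of_lt ha hb,
    noDoubleDescent_append_cons_of_lt ha hb, des_append_cons_of_lt ha hb, if_neg ha₀,
    length_append, length_cons, hb₀, false_imp_iff, true_and]
  by_cases hA : a.NoFinalDescent ∧ a.NoDoubleDescent
  · by_cases hB : b.NoFinalDescent ∧ b.NoDoubleDescent
    · rw [if_pos (by tauto), if_pos hA, if_pos hB]
      have := two_mul_des_add_one_le_length ha₀ hA.1 hA.2
      have := two_mul_des_add_one_le_length hb₀ hB.1 hB.2
      rw [show a.length + (b.length + 1) - 1 - 2 * (a.des + b.des + 1) =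
        (a.length - 1 - 2 * a.des) + (b.length - 1 - 2 * b.des) by omega]
      ring
    · rw [if_neg (by tauto), if_neg hB, mul_zero]
  · rw [if_neg (by tauto), if_neg hA, mul_zero, zero_mul]

end GammaWeight

end List

namespace Finset

variable {α : Type*} [LinearOrder α] {R : Type*} [CommSemiring R]

theorem sum_lists_insert_of_forall_lt {E : Finset α} {m : α} (hm : ∀ y ∈ E, m < y)
    (hE : E.Nonempty) {f : List α → R} {c₁ c₂ x : R}
    (hcons : ∀ b ≠ [], (∀ y ∈ b, m < y) → f (m :: b) = c₁ * f b)
    (hsnoc : ∀ a ≠ [], (∀ y ∈ a, m < y) → f (a ++ [m]) = c₂ * f a)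
    (hsplit : ∀ a ≠ [], ∀ b ≠ [], (∀ y ∈ a, m < y) → (∀ y ∈ b, m < y) →
      f (a ++ m :: b) = x * f a * f b) :
    ∑ l ∈ (insert m E).lists, f l = (c₁ + c₂) * ∑ l ∈ E.lists, f l +
      x * ∑ A ∈ E.powerset with A.Nonempty ∧ A ≠ E,
        (∑ a ∈ A.lists, f a) * ∑ b ∈ (E \ A).lists, f b := by
  have hlt {A : Finset α} (hA : A ⊆ E) {l : List α} (hl : l ∈ A.lists) : ∀ y ∈ l, m < y :=
    fun y hy => hm y (hA ((mem_of_mem_lists hl).1 hy))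
  have hne {A : Finset α} (hA : A.Nonempty) {l : List α} (hl : l ∈ A.lists) : l ≠ [] :=
    fun h => hA.ne_empty ((eq_nil_iff_of_mem_lists hl).1 h)
  rw [sum_lists_eq_sum_powerset (mem_insert_self m E), erase_insert fun h => (hm m h).false,
    sum_powerset_eq_add_add_sum hE]
  simp only [lists_empty, sdiff_empty, sdiff_self, bot_eq_empty, sum_singleton, List.nil_append]
  rw [add_mul, mul_sum, mul_sum, mul_sum,
    sum_congr rfl fun b hb => hcons b (hne hE hb) (hlt subset_rfl hb),
    sum_congr rfl fun a ha => hsnoc a (hne hE ha) (hlt subset_rfl ha)]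
  congr 1
  refine sum_congr rfl fun A hA => ?_
  obtain ⟨hAE, hA₀, hAE'⟩ : A ⊆ E ∧ A.Nonempty ∧ A ≠ E := by simpa using hA
  have hB₀ : (E \ A).Nonempty := sdiff_nonempty.2 fun h => hAE' (hAE.antisymm h)
  rw [sum_mul_sum, mul_sum]
  refine sum_congr rfl fun a ha => ?_
  rw [mul_sum]
  refine sum_congr rfl fun b hb => ?_
  rw [hsplit a (hne hA₀ ha) b (hne hB₀ hb) (hlt hAE ha) (hlt sdiff_subset hb), mul_assoc]

theorem sum_lists_pow_des_eq_sum_gammaWeight (x : R) (V : Finset α) :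
    ∑ l ∈ V.lists, x ^ l.des = ∑ l ∈ V.lists, l.gammaWeight x := by
  induction V using Finset.strongInduction with
  | H V ih =>
  rcases V.eq_empty_or_nonempty with rfl | hV
  · simp [List.gammaWeight, List.NoFinalDescent, List.NoDoubleDescent]
  set m := V.min' hV
  set E := V.erase m
  have hVE : V = insert m E := (insert_erase (min'_mem V hV)).symm
  have hm : ∀ y ∈ E, m < y := fun y hy => min'_lt_of_mem_erase_min' V hV hy
  rcases E.eq_empty_or_nonempty with hE | hE
  · rw [hVE, hE, insert_empty, lists_singleton]
    simp [List.gammaWeight, List.NoFinalDescent, List.NoDoubleDescent]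
  have hEV : E ⊂ V := erase_ssubset (min'_mem V hV)
  rw [hVE, sum_lists_insert_of_forall_lt hm hE (c₁ := 1) (c₂ := x) (x := x),
    sum_lists_insert_of_forall_lt hm hE (c₁ := 1 + x) (c₂ := 0) (x := x), ih E hEV, add_zero]
  · congr 2
    refine sum_congr rfl fun A hA => ?_
    have hAE : A ⊆ E := mem_powerset.1 (mem_filter.1 hA).1
    rw [ih A (hAE.trans_ssubset hEV), ih (E \ A) (sdiff_subset.trans_ssubset hEV)]
  · exact fun b hb₀ hb => List.gammaWeight_cons_of_lt x hb hb₀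
  · exact fun a ha₀ ha => by rw [List.gammaWeight_append_singleton_of_lt x ha ha₀, zero_mul]
  · exact fun a ha₀ b hb₀ ha hb => List.gammaWeight_append_cons_of_lt x ha hb ha₀ hb₀
  · exact fun b _ hb => by rw [List.des_cons_of_lt hb, one_mul]
  · exact fun a ha₀ ha => by
      rw [List.des_append_cons_of_lt ha (by simp), if_neg ha₀, List.des_nil, add_zero, pow_succ,
        mul_comm]
  · exact fun a ha₀ b _ ha hb => by
      rw [List.des_append_cons_of_lt ha hb, if_neg ha₀, pow_succ, pow_add]
      ring

end Finset

open Finset in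
theorem Equiv.Perm.sum_ofFn_eq_sum_lists {n : ℕ} {M : Type*} [AddCommMonoid M]
    (f : List (Fin n) → M) :
    ∑ w : Equiv.Perm (Fin n), f (List.ofFn w) = ∑ l ∈ (univ : Finset (Fin n)).lists, f l := by
  refine sum_nbij (fun w => List.ofFn w) (fun w _ => ?_) (fun w _ w' _ h => ?_) (fun l hl => ?_)
    (fun _ _ => rfl)
  · rw [mem_lists_iff_nodup]
    exact ⟨List.nodup_ofFn.2 w.injective, fun x => by simpa using w.surjective x⟩
  · exact Equiv.coe_fn_injective (List.ofFn_injective h)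
  · have hlen : n = l.length := by simpa using (length_of_mem_lists hl).symm
    obtain ⟨hnd, hmem⟩ := mem_lists_iff_nodup.1 hl
    refine ⟨(finCongr hlen).trans (hnd.getEquivOfForallMemList l fun x => (hmem x).2 (mem_univ x)),
      mem_univ _, ?_⟩
    refine List.ext_getElem (by simp [hlen]) fun i _ _ => ?_
    simp [List.Nodup.getEquivOfForallMemList]

theorem eulerian_gamma_general (n : ℕ) :
    ∑ w : Equiv.Perm (Fin n), (X : Polynomial ℤ) ^ des w
      = ∑ w ∈ Finset.univ.filter
            (fun w : Equiv.Perm (Fin n) => NoFinalDescent w ∧ NoDoubleDescent w),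
          (X : Polynomial ℤ) ^ des w * (1 + X) ^ (n - 1 - 2 * des w) := by
  have hdes (w : Equiv.Perm (Fin n)) : des w = (List.ofFn w).des := (List.des_ofFn w).symm
  have hgamma (w : Equiv.Perm (Fin n)) : (List.ofFn w).gammaWeight (X : ℤ[X]) =
      if NoFinalDescent w ∧ NoDoubleDescent w then X ^ des w * (1 + X) ^ (n - 1 - 2 * des w)
      else 0 := by
    rw [List.gammaWeight, List.noFinalDescent_ofFn, List.noDoubleDescent_ofFn, List.length_ofFn,
      hdes]
    rfl
  rw [Finset.sum_filter]
  simp_rw [← hgamma, hdes]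
  rw [Equiv.Perm.sum_ofFn_eq_sum_lists (fun l => X ^ l.des),
    Equiv.Perm.sum_ofFn_eq_sum_lists (List.gammaWeight X),
    Finset.sum_lists_pow_des_eq_sum_gammaWeight]

/-- The γ-expansion of the Eulerian polynomial: the descent generating
function of `S_n` equals the sum over permutations with no final descent and
no double descent of `t^des (1+t)^(n-1-2 des)`. -/
theorem eulerian_gamma (n : ℕ) (hn : 1 ≤ n) :
    ∑ w : Equiv.Perm (Fin n), (X : Polynomial ℤ) ^ des w
      = ∑ w ∈ Finset.univ.filter
            (fun w : Equiv.Perm (Fin n) => NoFinalDescent w ∧ NoDoubleDescent w),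
          (X : Polynomial ℤ) ^ des w * (1 + X) ^ (n - 1 - 2 * des w) :=
  eulerian_gamma_general n
end

section
/- Let n ≥ 1 and let B be a connected chordal building set on [n]. Then in ℤ[t] one has ∑_{≼ a B-tree} t^{des(≼)} = ∑_{w ∈ S_n(B)} t^{des(w)}, where the left sum is over all B-trees ≼ on [n]. (Both sides equal the h-polynomial of the nestohedron P_B.) -/
open Classical Polynomial

/-- The prefix set `{w(1), …, w(i)}`. -/
def prefixSet {n : ℕ} (w : Equiv.Perm (Fin n)) (i : Fin n) : Finset (Fin n) :=
  (Finset.univ.filter fun j => j ≤ i).image w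

/-- A building set on `[n]`. -/
def IsBuildingSet {n : ℕ} (B : Finset (Finset (Fin n))) : Prop :=
  (∀ I ∈ B, I.Nonempty) ∧
  (∀ I ∈ B, ∀ J ∈ B, (I ∩ J).Nonempty → I ∪ J ∈ B) ∧
  (∀ i : Fin n, {i} ∈ B)

/-- A chordal building set. -/
def IsChordal {n : ℕ} (B : Finset (Finset (Fin n))) : Prop :=
  ∀ I ∈ B, ∀ m ∈ I, I.filter (fun i => m ≤ i) ∈ B

/-- `w` is a `B`-permutation. -/
def IsBPerm {n : ℕ} (B : Finset (Finset (Fin n))) (w : Equiv.Perm (Fin n)) : Prop :=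
  ∀ i : Fin n, ∃ I ∈ B, I ⊆ prefixSet w i ∧ w i ∈ I ∧
    ∃ m ∈ I, ∀ x ∈ prefixSet w i, x ≤ m

/-- The down-set `T_{≤ i} = {j : j ≼ i}` of an element `i` with respect to
a relation encoded by the finset `R` of pairs `(a, b)` with `a ≼ b`. -/
def downSet {n : ℕ} (R : Finset (Fin n × Fin n)) (i : Fin n) : Finset (Fin n) :=
  Finset.univ.filter fun j => (j, i) ∈ R

/-- `R` (a finset of pairs, `(a,b) ∈ R` meaning `a ≼ b`) encodes a `B`-tree:
a partial order on `[n]` with a greatest element, totally ordered up-sets,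
down-sets in `B`, and no union of down-sets of `≥ 2` pairwise incomparable
elements lying in `B`. -/
def IsBTree {n : ℕ} (B : Finset (Finset (Fin n))) (R : Finset (Fin n × Fin n)) : Prop :=
  (∀ a : Fin n, (a, a) ∈ R) ∧
  (∀ a b : Fin n, (a, b) ∈ R → (b, a) ∈ R → a = b) ∧
  (∀ a b c : Fin n, (a, b) ∈ R → (b, c) ∈ R → (a, c) ∈ R) ∧
  (∃ g : Fin n, ∀ a : Fin n, (a, g) ∈ R) ∧
  (∀ a b c : Fin n, (a, b) ∈ R → (a, c) ∈ R → (b, c) ∈ R ∨ (c, b) ∈ R) ∧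
  (∀ i : Fin n, downSet R i ∈ B) ∧
  (∀ S : Finset (Fin n), 2 ≤ S.card →
    (∀ a ∈ S, ∀ b ∈ S, a ≠ b → (a, b) ∉ R ∧ (b, a) ∉ R) →
    S.biUnion (downSet R) ∉ B)

/-- Number of descents of a tree-poset: covering pairs `a ⋖ b` with `a > b`. -/
def desTree {n : ℕ} (R : Finset (Fin n × Fin n)) : ℕ :=
  (Finset.univ.filter fun p : Fin n × Fin n =>
    (p.1, p.2) ∈ R ∧ p.1 ≠ p.2 ∧
    (∀ c : Fin n, (p.1, c) ∈ R → (c, p.2) ∈ R → c = p.1 ∨ c = p.2) ∧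
    p.2 < p.1).card

/-!
Read a permutation `w` from left to right and let `a ≼ b` when `a` lies in the largest member of
`B` that contains `b` and is contained in the prefix of `w` ending at `b`. This is always a
`B`-tree, and on `B`-permutations `w ↦ ≼` is a bijection onto the `B`-trees: `w` is recovered
from its tree from right to left, each entry being the `≼`-maximal remaining element that lies
above the largest remaining one. When `B` is chordal, the descent covers `a ⋖ b`, `a > b`, of the
tree are exactly the pairs `(w i, w (i + 1))` at the descents of `w`.
-/

section

variable {n : ℕ}

section Prefix

variable {w v : Equiv.Perm (Fin n)} {i : Fin n} {x : Fin n}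

theorem mem_prefixSet : x ∈ prefixSet w i ↔ w.symm x ≤ i := by
  simp only [prefixSet, Finset.mem_image, Finset.mem_filter, Finset.mem_univ, true_and]
  exact ⟨by rintro ⟨j, hj, rfl⟩; simpa using hj, fun h => ⟨w.symm x, h, w.apply_symm_apply x⟩⟩

theorem apply_mem_prefixSet (w : Equiv.Perm (Fin n)) (i : Fin n) : w i ∈ prefixSet w i := by
  simp [mem_prefixSet]

theorem prefixSet_nonempty (w : Equiv.Perm (Fin n)) (i : Fin n) : (prefixSet w i).Nonempty :=
  ⟨w i, apply_mem_prefixSet w i⟩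

theorem card_prefixSet (w : Equiv.Perm (Fin n)) (i : Fin n) : (prefixSet w i).card = i + 1 := by
  rw [prefixSet, Finset.card_image_of_injective _ w.injective, ← Fin.card_Iic]
  congr 1
  ext; simp

theorem prefixSet_eq_of_forall_lt (h : ∀ j, i < j → w j = v j) :
    prefixSet w i = prefixSet v i := by
  have key : ∀ {w v : Equiv.Perm (Fin n)}, (∀ j, i < j → w j = v j) →
      prefixSet w i ⊆ prefixSet v i := by
    intro w v h x hx
    rw [mem_prefixSet] at hx ⊢
    by_contra! hlt
    have hwx : w.symm x = v.symm x := by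
      rw [Equiv.symm_apply_eq, h _ hlt, v.apply_symm_apply]
    exact (hlt.trans_le (hwx ▸ hx)).false
  exact (key h).antisymm (key fun j hj => (h j hj).symm)

theorem prefixSet_of_val_eq_succ {j : Fin n} (hij : (j : ℕ) = i + 1) :
    prefixSet w j = insert (w j) (prefixSet w i) := by
  ext x
  rw [Finset.mem_insert, mem_prefixSet, mem_prefixSet, Fin.le_def, Fin.le_def, ← w.symm_apply_eq,
    Fin.ext_iff]
  omega

end Prefix

theorem IsBuildingSet.union_biUnion_mem {B : Finset (Finset (Fin n))} (hB : IsBuildingSet B)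
    {ι : Type*} {I : Finset (Fin n)} (hI : I ∈ B) (F : Finset ι) (D : ι → Finset (Fin n))
    (hD : ∀ t ∈ F, D t ∈ B) (hmeet : ∀ t ∈ F, (D t ∩ I).Nonempty) :
    I ∪ F.biUnion D ∈ B := by
  induction F using Finset.induction_on with
  | empty => simpa using hI
  | insert t F _ ih =>
    have hrest := ih (fun s hs => hD s (by simp [hs])) (fun s hs => hmeet s (by simp [hs]))
    obtain ⟨x, hx⟩ := hmeet t (by simp)
    rw [Finset.biUnion_insert, Finset.union_left_comm]
    refine hB.2.1 _ (hD t (by simp)) _ hrest ⟨x, ?_⟩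
    simp only [Finset.mem_inter, Finset.mem_union] at hx ⊢
    exact ⟨hx.1, Or.inl hx.2⟩

theorem mem_downSet {R : Finset (Fin n × Fin n)} {x b : Fin n} :
    x ∈ downSet R b ↔ (x, b) ∈ R := by
  simp [downSet]

def permTree (B : Finset (Finset (Fin n))) (w : Equiv.Perm (Fin n)) : Finset (Fin n × Fin n) :=
  Finset.univ.filter fun p => ∃ I ∈ B, I ⊆ prefixSet w (w.symm p.2) ∧ p.2 ∈ I ∧ p.1 ∈ I

section PermTree

variable {B : Finset (Finset (Fin n))} {w : Equiv.Perm (Fin n)} {a b c : Fin n}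

theorem mem_permTree :
    (a, b) ∈ permTree B w ↔ ∃ I ∈ B, I ⊆ prefixSet w (w.symm b) ∧ b ∈ I ∧ a ∈ I := by
  simp [permTree]

theorem symm_le_of_mem_permTree (h : (a, b) ∈ permTree B w) : w.symm a ≤ w.symm b := by
  obtain ⟨I, -, hI, -, ha⟩ := mem_permTree.mp h
  exact mem_prefixSet.mp (hI ha)

theorem downSet_permTree_subset : downSet (permTree B w) b ⊆ prefixSet w (w.symm b) :=
  fun _ hx => mem_prefixSet.mpr (symm_le_of_mem_permTree (mem_downSet.mp hx))

theorem permTree_refl (hB : IsBuildingSet B) (a : Fin n) : (a, a) ∈ permTree B w :=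
  mem_permTree.mpr ⟨{a}, hB.2.2 a, by simp [mem_prefixSet], by simp, by simp⟩

theorem permTree_antisymm (hab : (a, b) ∈ permTree B w) (hba : (b, a) ∈ permTree B w) :
    a = b :=
  w.symm.injective ((symm_le_of_mem_permTree hab).antisymm (symm_le_of_mem_permTree hba))

theorem downSet_permTree_mem (hB : IsBuildingSet B) (b : Fin n) :
    downSet (permTree B w) b ∈ B := by
  have hdown : downSet (permTree B w) b =
      {b} ∪ (B.filter fun I => I ⊆ prefixSet w (w.symm b) ∧ b ∈ I).biUnion id := by
    ext x
    simp only [mem_downSet, mem_permTree, Finset.mem_union, Finset.mem_singleton,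
      Finset.mem_biUnion, Finset.mem_filter, id]
    constructor
    · rintro ⟨I, hI, hsub, hb, hx⟩
      exact Or.inr ⟨I, ⟨hI, hsub, hb⟩, hx⟩
    · rintro (rfl | ⟨I, ⟨hI, hsub, hb⟩, hx⟩)
      · exact mem_permTree.mp (permTree_refl hB x)
      · exact ⟨I, hI, hsub, hb, hx⟩
  rw [hdown]
  exact hB.union_biUnion_mem (hB.2.2 b) _ id (fun I hI => (Finset.mem_filter.mp hI).1)
    fun I hI => ⟨b, by simp [(Finset.mem_filter.mp hI).2.2]⟩

theorem downSet_permTree_subset_of_meet (hB : IsBuildingSet B) (hbc : w.symm b ≤ w.symm c)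
    (hmeet : (downSet (permTree B w) b ∩ downSet (permTree B w) c).Nonempty) :
    downSet (permTree B w) b ⊆ downSet (permTree B w) c := by
  intro x hx
  -- the union of the two down-sets is in `B` and lies in the prefix ending at `c`
  have hsub : downSet (permTree B w) b ∪ downSet (permTree B w) c ⊆ prefixSet w (w.symm c) :=
    Finset.union_subset (downSet_permTree_subset.trans fun y hy =>
      mem_prefixSet.mpr ((mem_prefixSet.mp hy).trans hbc)) downSet_permTree_subset
  refine mem_downSet.mpr (mem_permTree.mpr ⟨_, hB.2.1 _ (downSet_permTree_mem hB b) _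
    (downSet_permTree_mem hB c) hmeet, hsub, ?_, Finset.mem_union_left _ hx⟩)
  exact Finset.mem_union_right _ (mem_downSet.mpr (permTree_refl hB c))

theorem permTree_trans (hB : IsBuildingSet B) (hab : (a, b) ∈ permTree B w)
    (hbc : (b, c) ∈ permTree B w) : (a, c) ∈ permTree B w := by
  refine mem_downSet.mp (downSet_permTree_subset_of_meet hB (symm_le_of_mem_permTree hbc)
    ⟨b, ?_⟩ (mem_downSet.mpr hab))
  exact Finset.mem_inter.mpr ⟨mem_downSet.mpr (permTree_refl hB b), mem_downSet.mpr hbc⟩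

theorem permTree_total_of_mem (hB : IsBuildingSet B) (hab : (a, b) ∈ permTree B w)
    (hac : (a, c) ∈ permTree B w) : (b, c) ∈ permTree B w ∨ (c, b) ∈ permTree B w := by
  have hmeet : ∀ {b c}, (a, b) ∈ permTree B w → (a, c) ∈ permTree B w →
      (downSet (permTree B w) b ∩ downSet (permTree B w) c).Nonempty :=
    fun hab hac => ⟨a, Finset.mem_inter.mpr ⟨mem_downSet.mpr hab, mem_downSet.mpr hac⟩⟩
  rcases le_total (w.symm b) (w.symm c) with hbc | hcb
  · exact Or.inl (mem_downSet.mp (downSet_permTree_subset_of_meet hB hbc (hmeet hab hac)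
      (mem_downSet.mpr (permTree_refl hB b))))
  · exact Or.inr (mem_downSet.mp (downSet_permTree_subset_of_meet hB hcb (hmeet hac hab)
      (mem_downSet.mpr (permTree_refl hB c))))

theorem permTree_isBTree (hn : 1 ≤ n) (hB : IsBuildingSet B)
    (hconn : (Finset.univ : Finset (Fin n)) ∈ B) (w : Equiv.Perm (Fin n)) :
    IsBTree B (permTree B w) := by
  refine ⟨permTree_refl hB, fun _ _ => permTree_antisymm, fun _ _ _ => permTree_trans hB,
    ?_, fun _ _ _ => permTree_total_of_mem hB, downSet_permTree_mem hB, ?_⟩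
  · refine ⟨w ⟨n - 1, by omega⟩, fun a =>
      mem_permTree.mpr ⟨_, hconn, fun x _ => ?_, by simp, by simp⟩⟩
    rw [mem_prefixSet, w.symm_apply_apply, Fin.le_def]
    exact Nat.le_pred_of_lt (w.symm x).isLt
  · intro S hS hinc hU
    -- the element of `S` placed last by `w` lies above all of `S`
    obtain ⟨s, hs, hlast⟩ := S.exists_max_image w.symm (Finset.card_pos.mp (by omega))
    obtain ⟨t, ht, hts⟩ := S.exists_mem_ne (by omega : 1 < S.card) s
    have hsub : S.biUnion (downSet (permTree B w)) ⊆ prefixSet w (w.symm s) := by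
      intro x hx
      obtain ⟨u, hu, hxu⟩ := Finset.mem_biUnion.mp hx
      exact mem_prefixSet.mpr ((mem_prefixSet.mp (downSet_permTree_subset hxu)).trans (hlast u hu))
    have hmem : ∀ u ∈ S, u ∈ S.biUnion (downSet (permTree B w)) :=
      fun u hu => Finset.mem_biUnion.mpr ⟨u, hu, mem_downSet.mpr (permTree_refl hB u)⟩
    exact (hinc t ht s hs hts).1 (mem_permTree.mpr ⟨_, hU, hsub, hmem s hs, hmem t ht⟩)

end PermTree

def peel (f : Finset (Fin n) → Fin n) (k : ℕ) : Finset (Fin n) :=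
  (fun S => S.erase (f S))^[k] Finset.univ

section Peel

variable {f : Finset (Fin n) → Fin n}

theorem peel_succ (k : ℕ) : peel f (k + 1) = (peel f k).erase (f (peel f k)) :=
  Function.iterate_succ_apply' _ _ _

theorem peel_antitone : Antitone (peel f) :=
  antitone_nat_of_succ_le fun k => (peel_succ k).symm ▸ Finset.erase_subset _ _

theorem card_peel (hf : ∀ S : Finset (Fin n), S.Nonempty → f S ∈ S) (k : ℕ) :
    (peel f k).card = n - k := by
  induction k with
  | zero => simp [peel]
  | succ k ih =>
    rcases (peel f k).eq_empty_or_nonempty with h | h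
    · rw [peel_succ, h, Finset.erase_empty, Finset.card_empty]
      rw [h, Finset.card_empty] at ih
      omega
    · rw [peel_succ, Finset.card_erase_of_mem (hf _ h), ih]
      omega

end Peel

theorem exists_perm_forall_prefixSet (P : Finset (Fin n) → Fin n → Prop)
    (hP : ∀ S : Finset (Fin n), S.Nonempty → ∃ t ∈ S, P S t) :
    ∃ w : Equiv.Perm (Fin n), ∀ i, P (prefixSet w i) (w i) := by
  obtain _ | n := n
  · exact ⟨1, fun i => i.elim0⟩
  choose! f hfS hfP using hP
  -- `w i := f (peel f (n - i))`, filling the positions from right to left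
  have hne : ∀ i : Fin (n + 1), (peel f (n - i)).Nonempty := fun i => by
    rw [← Finset.card_pos, card_peel hfS]
    omega
  have hlt : ∀ i j : Fin (n + 1), i < j → f (peel f (n - i)) ≠ f (peel f (n - j)) := by
    intro i j hij heq
    have hmem : f (peel f (n - i)) ∈ peel f (n - j + 1) :=
      peel_antitone (by omega) (hfS _ (hne i))
    rw [peel_succ, heq] at hmem
    exact Finset.notMem_erase _ _ hmem
  have hinj : Function.Injective fun i : Fin (n + 1) => f (peel f (n - i)) := by
    intro i j h
    by_contra hij
    rcases lt_or_gt_of_ne hij with hij | hij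
    exacts [hlt i j hij h, hlt j i hij h.symm]
  set w := Equiv.ofBijective _ (Finite.injective_iff_bijective.mp hinj)
  have hprefix : ∀ i, prefixSet w i = peel f (n - i) := by
    intro i
    refine Finset.eq_of_subset_of_card_le (fun x hx => ?_) ?_
    · rw [← w.apply_symm_apply x]
      exact peel_antitone (by have := Fin.le_def.mp (mem_prefixSet.mp hx); omega) (hfS _ (hne _))
    · rw [card_peel hfS, card_prefixSet]
      omega
  exact ⟨w, fun i => hprefix i ▸ hfP _ (hne i)⟩

def IsMaximalIn (R : Finset (Fin n × Fin n)) (S : Finset (Fin n)) (t : Fin n) : Prop :=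
  t ∈ S ∧ ∀ z ∈ S, (t, z) ∈ R → z = t

def IsGreedyChoice (R : Finset (Fin n × Fin n)) (S : Finset (Fin n)) (t : Fin n) : Prop :=
  IsMaximalIn R S t ∧ ∃ m, IsGreatest (S : Set (Fin n)) m ∧ (m, t) ∈ R

def IsGreedyPerm (R : Finset (Fin n × Fin n)) (w : Equiv.Perm (Fin n)) : Prop :=
  ∀ i, IsGreedyChoice R (prefixSet w i) (w i)

section Greedy

variable {B : Finset (Finset (Fin n))} {R : Finset (Fin n × Fin n)}
  {w v : Equiv.Perm (Fin n)} {a b : Fin n}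

theorem IsBTree.exists_isMaximalIn (hR : IsBTree B R) {S : Finset (Fin n)} {x : Fin n}
    (hx : x ∈ S) : ∃ t, (x, t) ∈ R ∧ IsMaximalIn R S t := by
  obtain ⟨hrefl, hanti, htrans, -⟩ := hR
  -- a largest down-set among the elements of `S` above `x` belongs to a maximal element
  obtain ⟨t, ht, hmax⟩ := (S.filter fun c => (x, c) ∈ R).exists_max_image
    (fun c => (downSet R c).card) ⟨x, Finset.mem_filter.mpr ⟨hx, hrefl x⟩⟩
  obtain ⟨htS, hxt⟩ := Finset.mem_filter.mp ht
  refine ⟨t, hxt, htS, fun z hz htz => hanti _ _ ?_ htz⟩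
  have hsub : downSet R t ⊆ downSet R z :=
    fun y hy => mem_downSet.mpr (htrans _ _ _ (mem_downSet.mp hy) htz)
  have heq := Finset.eq_of_subset_of_card_le hsub
    (hmax z (Finset.mem_filter.mpr ⟨hz, htrans _ _ _ hxt htz⟩))
  exact mem_downSet.mp (heq ▸ mem_downSet.mpr (hrefl z))

theorem IsBTree.exists_isGreedyPerm (hR : IsBTree B R) : ∃ w, IsGreedyPerm R w :=
  exists_perm_forall_prefixSet _ fun S hS =>
    have ⟨t, hmt, ht⟩ := hR.exists_isMaximalIn (S.max'_mem hS)
    ⟨t, ht.1, ht, _, S.isGreatest_max' hS, hmt⟩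

theorem IsGreedyPerm.symm_le (hw : IsGreedyPerm R w) (hab : (a, b) ∈ R) :
    w.symm a ≤ w.symm b := by
  by_contra! hlt
  have hb : b ∈ prefixSet w (w.symm a) := mem_prefixSet.mpr hlt.le
  have := (hw (w.symm a)).1.2 b hb (by rwa [w.apply_symm_apply])
  exact hlt.ne (by rw [this, w.symm_apply_apply])

theorem IsGreedyPerm.downSet_subset (hw : IsGreedyPerm R w) (b : Fin n) :
    downSet R b ⊆ prefixSet w (w.symm b) :=
  fun _ hx => mem_prefixSet.mpr (hw.symm_le (mem_downSet.mp hx))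

theorem IsGreedyPerm.isBPerm (hR : IsBTree B R) (hw : IsGreedyPerm R w) : IsBPerm B w := by
  intro i
  obtain ⟨hrefl, -, -, -, -, hdown, -⟩ := hR
  obtain ⟨-, m, hm, hmi⟩ := hw i
  refine ⟨downSet R (w i), hdown _, ?_, mem_downSet.mpr (hrefl _), m, mem_downSet.mpr hmi, hm.2⟩
  simpa using hw.downSet_subset (w i)

theorem IsBTree.subset_downSet_of_isMaximalIn (hB : IsBuildingSet B) (hR : IsBTree B R)
    {S I : Finset (Fin n)} (hI : I ∈ B) (hIS : I ⊆ S) (hb : IsMaximalIn R S b) (hbI : b ∈ I) :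
    I ⊆ downSet R b := by
  obtain ⟨hrefl, -, -, -, -, hdown, hinc⟩ := id hR
  intro a haI
  by_contra hab
  -- the maximal elements of `S` lying above `I` are pairwise incomparable, and there are
  -- at least two of them (`b` and one above `a`), but their down-sets cover `I`
  set F := S.filter fun t => IsMaximalIn R S t ∧ ∃ x ∈ I, (x, t) ∈ R
  have habove : ∀ x ∈ I, ∃ t ∈ F, (x, t) ∈ R := fun x hx =>
    have ⟨t, hxt, ht⟩ := hR.exists_isMaximalIn (hIS hx)
    ⟨t, Finset.mem_filter.mpr ⟨ht.1, ht, x, hx, hxt⟩, hxt⟩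
  have hbF : b ∈ F := Finset.mem_filter.mpr ⟨hb.1, hb, b, hbI, hrefl b⟩
  obtain ⟨t, htF, hat⟩ := habove a haI
  have hcard : 2 ≤ F.card :=
    Finset.one_lt_card.mpr ⟨t, htF, b, hbF, by rintro rfl; exact hab (mem_downSet.mpr hat)⟩
  have hmax : ∀ t ∈ F, IsMaximalIn R S t := fun t ht => (Finset.mem_filter.mp ht).2.1
  have hcover : I ⊆ F.biUnion (downSet R) := fun x hx =>
    have ⟨t, ht, hxt⟩ := habove x hx
    Finset.mem_biUnion.mpr ⟨t, ht, mem_downSet.mpr hxt⟩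
  refine hinc F hcard (fun x hx y hy hxy =>
    ⟨fun h => hxy ((hmax x hx).2 y (hmax y hy).1 h).symm,
      fun h => hxy ((hmax y hy).2 x (hmax x hx).1 h)⟩) ?_
  rw [← Finset.union_eq_right.mpr hcover]
  refine hB.union_biUnion_mem hI F _ (fun t _ => hdown t) fun t ht => ?_
  obtain ⟨-, -, x, hx, hxt⟩ := Finset.mem_filter.mp ht
  exact ⟨x, Finset.mem_inter.mpr ⟨mem_downSet.mpr hxt, hx⟩⟩

theorem IsGreedyPerm.permTree_eq (hB : IsBuildingSet B) (hR : IsBTree B R)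
    (hw : IsGreedyPerm R w) : permTree B w = R := by
  obtain ⟨hrefl, -, -, -, -, hdown, -⟩ := id hR
  ext ⟨a, b⟩
  refine ⟨fun h => ?_, fun h => mem_permTree.mpr ⟨downSet R b, hdown b,
    hw.downSet_subset b, mem_downSet.mpr (hrefl b), mem_downSet.mpr h⟩⟩
  obtain ⟨I, hI, hIS, hbI, haI⟩ := mem_permTree.mp h
  have hb := (hw (w.symm b)).1
  rw [w.apply_symm_apply] at hb
  exact mem_downSet.mp (hR.subset_downSet_of_isMaximalIn hB hI hIS hb hbI haI)

theorem IsGreedyPerm.unique (htot : ∀ a b c, (a, b) ∈ R → (a, c) ∈ R → (b, c) ∈ R ∨ (c, b) ∈ R)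
    (hw : IsGreedyPerm R w) (hv : IsGreedyPerm R v) : w = v := by
  by_contra hne
  obtain ⟨i₀, hi₀⟩ : ∃ i, w i ≠ v i := by
    by_contra! h
    exact hne (Equiv.ext h)
  obtain ⟨i, hi, hlast⟩ :=
    (Finset.univ.filter fun i => w i ≠ v i).exists_max_image id ⟨i₀, by simpa using hi₀⟩
  have hwvi : w i ≠ v i := (Finset.mem_filter.mp hi).2
  have hS : prefixSet w i = prefixSet v i := prefixSet_eq_of_forall_lt fun j hij => by
    by_contra h
    exact (hlast j (by simpa using h)).not_gt hij
  -- both `w i` and `v i` lie above the largest entry of the common prefix, so they are comparable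
  obtain ⟨hwmax, m, hm, hmw⟩ := hw i
  obtain ⟨hvmax, m', hm', hmv⟩ := hv i
  rw [hS] at hwmax hm
  rw [hm.unique hm'] at hmw
  rcases htot _ _ _ hmw hmv with h | h
  · exact hwvi (hwmax.2 _ hvmax.1 h).symm
  · exact hwvi (hvmax.2 _ hwmax.1 h)

end Greedy

section BPerm

variable {B : Finset (Finset (Fin n))} {w : Equiv.Perm (Fin n)}

theorem isMaximalIn_permTree (w : Equiv.Perm (Fin n)) (i : Fin n) :
    IsMaximalIn (permTree B w) (prefixSet w i) (w i) := by
  refine ⟨apply_mem_prefixSet w i, fun z hz hiz => w.symm.injective ?_⟩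
  have := symm_le_of_mem_permTree hiz
  rw [w.symm_apply_apply] at this ⊢
  exact (mem_prefixSet.mp hz).antisymm this

theorem IsBPerm.isGreedyPerm_permTree (hw : IsBPerm B w) : IsGreedyPerm (permTree B w) w := by
  intro i
  obtain ⟨I, hI, hIS, hwI, m, hmI, hm⟩ := hw i
  exact ⟨isMaximalIn_permTree w i, m, ⟨hIS hmI, hm⟩,
    mem_permTree.mpr ⟨I, hI, by rwa [w.symm_apply_apply], hwI, hmI⟩⟩

theorem permTree_injOn (hB : IsBuildingSet B) : Set.InjOn (permTree B) {w | IsBPerm B w} :=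
  fun _ hw _ hv h => hw.isGreedyPerm_permTree.unique (fun _ _ _ => permTree_total_of_mem hB)
    (h ▸ hv.isGreedyPerm_permTree)

end BPerm

section Descents

variable {B : Finset (Finset (Fin n))} {w : Equiv.Perm (Fin n)} {x y : Fin n}

theorem IsBPerm.max'_prefixSet_mem_permTree (hw : IsBPerm B w) (i : Fin n) :
    ((prefixSet w i).max' (prefixSet_nonempty w i), w i) ∈ permTree B w := by
  obtain ⟨-, m, hm, hmw⟩ := hw.isGreedyPerm_permTree i
  rwa [hm.unique ((prefixSet w i).isGreatest_max' _)] at hmw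

theorem IsBPerm.mem_permTree_of_lt_max' (hB : IsBuildingSet B) (hw : IsBPerm B w) {i j : Fin n}
    (hij : (j : ℕ) = i + 1) (hlt : w j < (prefixSet w i).max' (prefixSet_nonempty w i)) :
    (w i, w j) ∈ permTree B w := by
  have hmax : (prefixSet w j).max' (prefixSet_nonempty w j) =
      (prefixSet w i).max' (prefixSet_nonempty w i) := by
    refine le_antisymm (Finset.max'_le _ _ _ fun z hz => ?_)
      (Finset.max'_subset _ (prefixSet_of_val_eq_succ hij ▸ Finset.subset_insert _ _))
    rcases Finset.mem_insert.mp (prefixSet_of_val_eq_succ hij ▸ hz) with rfl | hz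
    exacts [hlt.le, Finset.le_max' _ _ hz]
  have hj := hw.max'_prefixSet_mem_permTree j
  rw [hmax] at hj
  refine (permTree_total_of_mem hB (hw.max'_prefixSet_mem_permTree i) hj).resolve_right
    fun hji => ?_
  have := Fin.le_def.mp (symm_le_of_mem_permTree hji)
  simp only [Equiv.symm_apply_apply] at this
  omega

theorem eq_or_eq_of_mem_permTree_of_val_eq_succ {c : Fin n} (hxc : (x, c) ∈ permTree B w)
    (hcy : (c, y) ∈ permTree B w) (hxy : (w.symm y : ℕ) = w.symm x + 1) : c = x ∨ c = y := by
  have h1 := Fin.le_def.mp (symm_le_of_mem_permTree hxc)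
  have h2 := Fin.le_def.mp (symm_le_of_mem_permTree hcy)
  rcases (by omega : (w.symm c : ℕ) = w.symm x ∨ (w.symm c : ℕ) = w.symm y) with h | h
  exacts [Or.inl (w.symm.injective (Fin.ext h)), Or.inr (w.symm.injective (Fin.ext h))]

theorem symm_le_of_cover_of_lt (hB : IsBuildingSet B) (hch : IsChordal B)
    (hxy : (x, y) ∈ permTree B w)
    (hcov : ∀ c, (x, c) ∈ permTree B w → (c, y) ∈ permTree B w → c = x ∨ c = y)
    (hlt : y < x) {z : Fin n} (hzy : (z, y) ∈ permTree B w) (hxz : x ≤ z) :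
    w.symm z ≤ w.symm x := by
  -- `U ∈ B` by chordality, so its last-placed element `q` satisfies `x ≼ q ≼ y`, forcing `q = x`
  set U := (downSet (permTree B w) y).filter (x ≤ ·)
  have hU : U ∈ B := hch _ (downSet_permTree_mem hB y) x (mem_downSet.mpr hxy)
  have hxU : x ∈ U := Finset.mem_filter.mpr ⟨mem_downSet.mpr hxy, le_rfl⟩
  obtain ⟨q, hqU, hq⟩ := U.exists_max_image w.symm ⟨x, hxU⟩
  obtain ⟨hqy, hxq⟩ := Finset.mem_filter.mp hqU
  have hxq' : (x, q) ∈ permTree B w :=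
    mem_permTree.mpr ⟨U, hU, fun u hu => mem_prefixSet.mpr (hq u hu), hqU, hxU⟩
  rcases hcov q hxq' (mem_downSet.mp hqy) with rfl | rfl
  · exact hq z (Finset.mem_filter.mpr ⟨mem_downSet.mpr hzy, hxz⟩)
  · exact absurd hlt (not_lt.mpr hxq)

theorem IsBPerm.val_symm_eq_succ_of_cover_of_lt (hB : IsBuildingSet B) (hch : IsChordal B)
    (hw : IsBPerm B w) (hxy : (x, y) ∈ permTree B w) (hne : x ≠ y)
    (hcov : ∀ c, (x, c) ∈ permTree B w → (c, y) ∈ permTree B w → c = x ∨ c = y)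
    (hlt : y < x) : (w.symm y : ℕ) = w.symm x + 1 := by
  have hxy' : (w.symm x : ℕ) < w.symm y :=
    Fin.lt_def.mp ((symm_le_of_mem_permTree hxy).lt_of_ne (w.symm.injective.ne hne))
  by_contra hk
  obtain ⟨j, hj⟩ : ∃ j : Fin n, (j : ℕ) = w.symm x + 1 := ⟨⟨_, by omega⟩, rfl⟩
  have hjy : w j ∈ prefixSet w (w.symm y) := by
    rw [mem_prefixSet, w.symm_apply_apply, Fin.le_def]
    omega
  have hjx : w j ∉ prefixSet w (w.symm x) := by
    rw [mem_prefixSet, w.symm_apply_apply, Fin.le_def]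
    omega
  -- the largest entry up to `y` lies below `y` and above `x`, hence is placed no later than `x`
  have hmax : (prefixSet w (w.symm y)).max' (prefixSet_nonempty _ _) ≤
      (prefixSet w (w.symm x)).max' (prefixSet_nonempty _ _) := by
    have hmy := hw.max'_prefixSet_mem_permTree (w.symm y)
    rw [w.apply_symm_apply] at hmy
    exact Finset.le_max' _ _ (mem_prefixSet.mpr (symm_le_of_cover_of_lt hB hch hxy hcov hlt hmy
      (Finset.le_max' _ x (mem_prefixSet.mpr (symm_le_of_mem_permTree hxy)))))
  have hxj := hw.mem_permTree_of_lt_max' hB hj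
    (((Finset.le_max' _ _ hjy).trans hmax).lt_of_ne fun h => hjx (h ▸ Finset.max'_mem _ _))
  rw [w.apply_symm_apply] at hxj
  rcases permTree_total_of_mem hB hxj hxy with hjy | hyj
  · rcases hcov _ hxj hjy with h | h <;>
    · have := congrArg (fun z => (w.symm z : ℕ)) h
      simp only [w.symm_apply_apply] at this
      omega
  · have := Fin.le_def.mp (symm_le_of_mem_permTree hyj)
    rw [w.symm_apply_apply] at this
    omega

theorem IsBPerm.desTree_permTree (hB : IsBuildingSet B) (hch : IsChordal B) (hw : IsBPerm B w) :
    desTree (permTree B w) = des w := by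
  refine Finset.card_nbij (fun p => w.symm p.1) (fun p hp => ?_) (fun p hp q hq hpq => ?_)
    (fun i hi => ?_)
  · obtain ⟨-, hmem, hne, hcov, hlt⟩ := Finset.mem_filter.mp hp
    refine Finset.mem_filter.mpr ⟨Finset.mem_univ _, w.symm p.2,
      hw.val_symm_eq_succ_of_cover_of_lt hB hch hmem hne hcov hlt, ?_⟩
    simpa using hlt
  · obtain ⟨-, hpm, hpne, hpcov, hplt⟩ := Finset.mem_filter.mp (Finset.mem_coe.mp hp)
    obtain ⟨-, hqm, hqne, hqcov, hqlt⟩ := Finset.mem_filter.mp (Finset.mem_coe.mp hq)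
    have h1 := hw.val_symm_eq_succ_of_cover_of_lt hB hch hpm hpne hpcov hplt
    have h2 := hw.val_symm_eq_succ_of_cover_of_lt hB hch hqm hqne hqcov hqlt
    simp only at hpq
    exact Prod.ext (w.symm.injective hpq) (w.symm.injective (Fin.ext (by rw [h1, h2, hpq])))
  · obtain ⟨-, j, hj, hlt⟩ := Finset.mem_filter.mp (Finset.mem_coe.mp hi)
    have hxj := hw.mem_permTree_of_lt_max' hB hj
      (hlt.trans_le (Finset.le_max' _ _ (apply_mem_prefixSet w i)))
    refine ⟨(w i, w j), Finset.mem_filter.mpr ⟨Finset.mem_univ _, hxj, w.injective.ne ?_,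
      fun c hxc hcy => eq_or_eq_of_mem_permTree_of_val_eq_succ hxc hcy (by simpa using hj), hlt⟩,
      by simp⟩
    exact fun h => by simp [h] at hj

end Descents

end

/-- For a connected chordal building set `B` on `[n]`, the descent generating
function over `B`-trees equals the descent generating function over
`B`-permutations (both are the `h`-polynomial of the nestohedron `P_B`). -/
theorem btrees_eq_bperms_descents (n : ℕ) (hn : 1 ≤ n)
    (B : Finset (Finset (Fin n))) (hB : IsBuildingSet B)
    (hconn : (Finset.univ : Finset (Fin n)) ∈ B) (hch : IsChordal B) :
    ∑ R ∈ Finset.univ.filter (fun R : Finset (Fin n × Fin n) => IsBTree B R),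
        (X : Polynomial ℤ) ^ desTree R
      = ∑ w ∈ Finset.univ.filter (fun w : Equiv.Perm (Fin n) => IsBPerm B w),
          (X : Polynomial ℤ) ^ des w := by
  symm
  refine Finset.sum_nbij (permTree B) (fun w _ => ?_) (fun w hw v hv => ?_) (fun R hR => ?_)
    (fun w hw => ?_)
  · exact Finset.mem_filter.mpr ⟨Finset.mem_univ _, permTree_isBTree hn hB hconn w⟩
  · simp only [Finset.coe_filter, Finset.mem_univ, true_and] at hw hv
    exact permTree_injOn hB hw hv
  · have hR : IsBTree B R := (Finset.mem_filter.mp hR).2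
    obtain ⟨w, hw⟩ := hR.exists_isGreedyPerm
    exact ⟨w, by simpa using hw.isBPerm hR, hw.permTree_eq hB hR⟩
  · rw [(Finset.mem_filter.mp hw).2.desTree_permTree hB hch]
end

section
/- Let B be a connected chordal building set on [n], let ≼ be a B-tree, and let w be the lexicographically minimal linear extension of ≼. Then the descent set of w equals the descent set of ≼: the set of pairs (w(i), w(i+1)) with w(i) > w(i+1) coincides with the set of pairs (a,b) such that a ⋖ b is a covering relation of ≼ and a > b as integers. -/
open Classical

/-- The relation `r` (with `r a b` meaning `a ≼ b`) is a `B`-tree. -/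
def IsBTreeRel {n : ℕ} (B : Finset (Finset (Fin n))) (r : Fin n → Fin n → Prop) : Prop :=
  (∀ a, r a a) ∧
  (∀ a b, r a b → r b a → a = b) ∧
  (∀ a b c, r a b → r b c → r a c) ∧
  (∃ g, ∀ a, r a g) ∧
  (∀ a b c, r a b → r a c → r b c ∨ r c b) ∧
  (∀ i : Fin n, (Finset.univ.filter fun j => r j i) ∈ B) ∧
  (∀ S : Finset (Fin n), 2 ≤ S.card →
    (∀ a ∈ S, ∀ b ∈ S, a ≠ b → ¬ r a b ∧ ¬ r b a) →
    S.biUnion (fun i => Finset.univ.filter fun j => r j i) ∉ B)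

/-- `w` is a linear extension of the relation `r`. -/
def IsLinExt {n : ℕ} (r : Fin n → Fin n → Prop) (w : Equiv.Perm (Fin n)) : Prop :=
  ∀ i j : Fin n, r (w i) (w j) → i ≤ j

/-- `w` is the lexicographically minimal linear extension of `r`. -/
def IsLexMinLinExt {n : ℕ} (r : Fin n → Fin n → Prop) (w : Equiv.Perm (Fin n)) : Prop :=
  IsLinExt r w ∧ ∀ u : Equiv.Perm (Fin n), IsLinExt r u →
    w = u ∨ ∃ i : Fin n, (∀ j : Fin n, j < i → w j = u j) ∧ w i < u i

lemma linext_le {n : ℕ} {r : Fin n → Fin n → Prop} {w : Equiv.Perm (Fin n)}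
    (hle : IsLinExt r w) {x y : Fin n} (hxy : r x y) : w.symm x ≤ w.symm y := by
  have := hle (w.symm x) (w.symm y) (by simpa using hxy)
  exact this

lemma linext_lt {n : ℕ} {r : Fin n → Fin n → Prop} {w : Equiv.Perm (Fin n)}
    (hle : IsLinExt r w) {x y : Fin n} (hxy : r x y) (hne : x ≠ y) :
    w.symm x < w.symm y := by
  refine lt_of_le_of_ne (linext_le hle hxy) ?_
  intro h
  exact hne (by simpa using congrArg w h)

/-- Greedy lemma: if all strict descendants of `x` are placed before position `i`
and `x < w i`, then `x` itself is placed before `i`. -/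
lemma greedy {n : ℕ} {r : Fin n → Fin n → Prop} {w : Equiv.Perm (Fin n)}
    (hw : IsLexMinLinExt r w) (x i : Fin n)
    (hdesc : ∀ y, r y x → y ≠ x → w.symm y < i) (hlt : x < w i) :
    w.symm x < i := by
  obtain ⟨hle, hmin⟩ := hw
  set k := w.symm x with hk
  have hwk : w k = x := by simp [hk]
  by_contra hcon
  have hki : i < k := by
    rcases lt_or_eq_of_le (not_lt.mp hcon) with h | h
    · exact h
    · exfalso; rw [← h] at hwk; exact absurd hwk (by intro h'; rw [h'] at hlt; exact lt_irrefl _ hlt)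
  -- the shift map
  set τ : Fin n → Fin n := fun p =>
    if p = i then k else if i < p ∧ p ≤ k then ⟨p.val - 1, by omega⟩ else p with hτ
  have hτval : ∀ p : Fin n, (τ p = k ∧ p = i) ∨ (i < p ∧ p ≤ k ∧ (τ p).val = p.val - 1)
      ∨ (p ≠ i ∧ ¬ (i < p ∧ p ≤ k) ∧ τ p = p) := by
    intro p
    by_cases h1 : p = i
    · left; exact ⟨by simp [hτ, h1], h1⟩
    · by_cases h2 : i < p ∧ p ≤ k
      · right; left; exact ⟨h2.1, h2.2, by simp [hτ, h1, h2]⟩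
      · right; right; exact ⟨h1, h2, by simp [hτ, h1, h2]⟩
  have hτinj : Function.Injective τ := by
    intro p q h
    rcases hτval p with ⟨hp, hp'⟩ | ⟨hp1, hp2, hp3⟩ | ⟨hp1, hp2, hp3⟩ <;>
      rcases hτval q with ⟨hq, hq'⟩ | ⟨hq1, hq2, hq3⟩ | ⟨hq1, hq2, hq3⟩
    · rw [hp', hq']
    · exfalso
      have : (τ p).val = (τ q).val := congrArg Fin.val h
      rw [hp, hq3] at this
      have h1 : (i:ℕ) < q := hq1
      have h2 : (q:ℕ) ≤ k := hq2
      omega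
    · exfalso
      have : (τ p).val = (τ q).val := congrArg Fin.val h
      rw [hp, hq3] at this
      have hne : (q:ℕ) ≠ i := fun hh => hq1 (Fin.ext hh)
      have : (q:ℕ) = k := this.symm
      have h1 : (i:ℕ) < k := hki
      have : ¬ ((i:ℕ) < q ∧ (q:ℕ) ≤ k) := by
        intro hh; exact hq2 ⟨by exact (Fin.lt_def).2 hh.1, (Fin.le_def).2 hh.2⟩
      omega
    · exfalso
      have : (τ p).val = (τ q).val := congrArg Fin.val h
      rw [hq, hp3] at this
      have h1 : (i:ℕ) < p := hp1
      have h2 : (p:ℕ) ≤ k := hp2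
      omega
    · apply Fin.ext
      have : (τ p).val = (τ q).val := congrArg Fin.val h
      rw [hp3, hq3] at this
      have h1 : (i:ℕ) < p := hp1
      have h2 : (i:ℕ) < q := hq1
      omega
    · exfalso
      have : (τ p).val = (τ q).val := congrArg Fin.val h
      rw [hp3, hq3] at this
      have h1 : (i:ℕ) < p := hp1
      have h2 : (p:ℕ) ≤ k := hp2
      have hne : (q:ℕ) ≠ i := fun hh => hq1 (Fin.ext hh)
      have : ¬ ((i:ℕ) < q ∧ (q:ℕ) ≤ k) := by
        intro hh; exact hq2 ⟨(Fin.lt_def).2 hh.1, (Fin.le_def).2 hh.2⟩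
      omega
    · exfalso
      have : (τ p).val = (τ q).val := congrArg Fin.val h
      rw [hq, hp3] at this
      have hne : (p:ℕ) ≠ i := fun hh => hp1 (Fin.ext hh)
      have h1 : (i:ℕ) < k := hki
      have : ¬ ((i:ℕ) < p ∧ (p:ℕ) ≤ k) := by
        intro hh; exact hp2 ⟨(Fin.lt_def).2 hh.1, (Fin.le_def).2 hh.2⟩
      omega
    · exfalso
      have : (τ p).val = (τ q).val := congrArg Fin.val h
      rw [hp3, hq3] at this
      have h1 : (i:ℕ) < q := hq1
      have h2 : (q:ℕ) ≤ k := hq2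
      have hne : (p:ℕ) ≠ i := fun hh => hp1 (Fin.ext hh)
      have : ¬ ((i:ℕ) < p ∧ (p:ℕ) ≤ k) := by
        intro hh; exact hp2 ⟨(Fin.lt_def).2 hh.1, (Fin.le_def).2 hh.2⟩
      omega
    · rw [hp3, hq3] at h; exact h
  have hτi : τ i = k := by
    rcases hτval i with ⟨h, _⟩ | ⟨h1, _, _⟩ | ⟨h1, _, _⟩
    · exact h
    · exact absurd h1 (lt_irrefl i)
    · exact absurd rfl h1
  set σ : Equiv.Perm (Fin n) := Equiv.ofBijective τ (Finite.injective_iff_bijective.mp hτinj)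
    with hσ
  set u : Equiv.Perm (Fin n) := σ.trans w with hu
  have hua : ∀ p, u p = w (τ p) := fun p => rfl
  have hulin : ∀ p q : Fin n, r (u p) (u q) → p ≤ q := by
    intro p q hpq
    rw [hua, hua] at hpq
    have hττ : (τ p : ℕ) ≤ (τ q : ℕ) := hle _ _ hpq
    by_contra hqp
    have hqp : (q : ℕ) < p := by
      have := Fin.lt_def.mp (lt_of_not_ge hqp); exact this
    by_cases hqi : q = i
    · -- u q = x, so w (τ p) is a strict descendant of x or x itself
      rw [hqi, hτi, hwk] at hpq
      have hne : w (τ p) ≠ x := by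
        intro hh
        have hτpk : τ p = k := w.injective (by rw [hh, hwk])
        have hτpk' : (τ p : ℕ) = k := congrArg Fin.val hτpk
        rcases hτval p with ⟨h1, h2⟩ | ⟨h1, h2, h3⟩ | ⟨h1, h2, h3⟩
        · have hp : (p:ℕ) = i := congrArg Fin.val h2
          have hq : (q:ℕ) = i := congrArg Fin.val hqi
          omega
        · have h1' : (i:ℕ) < p := h1
          have h2' : (p:ℕ) ≤ k := h2
          have hik : (i:ℕ) < k := hki
          omega
        · have hp : (τ p : ℕ) = p := congrArg Fin.val h3
          have hik : (i:ℕ) < k := hki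
          have hx : ¬ ((i:ℕ) < p ∧ (p:ℕ) ≤ k) := fun hh2 =>
            h2 ⟨Fin.lt_def.2 hh2.1, Fin.le_def.2 hh2.2⟩
          omega
      have hlt2 : w.symm (w (τ p)) < i := hdesc _ hpq hne
      rw [Equiv.symm_apply_apply] at hlt2
      have hlt2 : (τ p : ℕ) < i := hlt2
      have hqi' : (q:ℕ) = i := congrArg Fin.val hqi
      rcases hτval p with ⟨h1, h2⟩ | ⟨h1, h2, h3⟩ | ⟨h1, h2, h3⟩
      · have := congrArg Fin.val h2; omega
      · have h1' : (i:ℕ) < p := h1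
        omega
      · have := congrArg Fin.val h3
        have hx : ¬ ((i:ℕ) < p ∧ (p:ℕ) ≤ k) := fun hh =>
          h2 ⟨Fin.lt_def.2 hh.1, Fin.le_def.2 hh.2⟩
        omega
    · -- pure arithmetic
      have hqi' : (q:ℕ) ≠ i := fun hh => hqi (Fin.ext hh)
      have hik : (i:ℕ) < k := hki
      rcases hτval p with ⟨h1, h2⟩ | ⟨h1, h2, h3⟩ | ⟨h1, h2, h3⟩ <;>
        rcases hτval q with ⟨g1, g2⟩ | ⟨g1, g2, g3⟩ | ⟨g1, g2, g3⟩
      · exact hqi g2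
      · have := congrArg Fin.val h1
        have hp2 : (p:ℕ) = i := congrArg Fin.val h2
        have g1' : (i:ℕ) < q := g1
        omega
      · have := congrArg Fin.val h1
        have hp2 : (p:ℕ) = i := congrArg Fin.val h2
        have := congrArg Fin.val g3
        omega
      · exact hqi g2
      · have h1' : (i:ℕ) < p := h1
        have g1' : (i:ℕ) < q := g1
        omega
      · have h1' : (i:ℕ) < p := h1
        have h2' : (p:ℕ) ≤ k := h2
        have := congrArg Fin.val g3
        have hx : ¬ ((i:ℕ) < q ∧ (q:ℕ) ≤ k) := fun hh =>
          g2 ⟨Fin.lt_def.2 hh.1, Fin.le_def.2 hh.2⟩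
        omega
      · exact hqi g2
      · have := congrArg Fin.val h3
        have g1' : (i:ℕ) < q := g1
        have g2' : (q:ℕ) ≤ k := g2
        have hx : ¬ ((i:ℕ) < p ∧ (p:ℕ) ≤ k) := fun hh =>
          h2 ⟨Fin.lt_def.2 hh.1, Fin.le_def.2 hh.2⟩
        omega
      · have := congrArg Fin.val h3
        have := congrArg Fin.val g3
        omega
  rcases hmin u hulin with heq | ⟨m, hpre, hlt'⟩
  · have : w i = u i := congrFun (congrArg _ heq) i
    rw [hua, hτi, hwk] at this
    exact absurd this.symm (ne_of_lt hlt)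
  · rcases lt_trichotomy m i with hmi | hmi | hmi
    · have : u m = w m := by
        rw [hua]
        rcases hτval m with ⟨h1, h2⟩ | ⟨h1, h2, h3⟩ | ⟨h1, h2, h3⟩
        · exact absurd h2 (ne_of_lt hmi)
        · exact absurd h1 (asymm hmi)
        · rw [h3]
      rw [this] at hlt'
      exact lt_irrefl _ hlt'
    · rw [hmi, hua, hτi, hwk] at hlt'
      exact lt_asymm hlt hlt'
    · have : w i = u i := hpre i hmi
      rw [hua, hτi, hwk] at this
      exact absurd this.symm (ne_of_lt hlt)

/-- Key structural lemma from chordality: if `a ⋖ b` is a cover with `b < a`,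
then every `x ≺ b` with `b < x` satisfies `x ≼ a`. -/
lemma chordal_cover {n : ℕ} {B : Finset (Finset (Fin n))} (hB : IsBuildingSet B)
    (hch : IsChordal B) {r : Fin n → Fin n → Prop} (htree : IsBTreeRel B r)
    {w : Equiv.Perm (Fin n)} (hle : IsLinExt r w)
    {a b : Fin n} (hrab : r a b) (hne : a ≠ b)
    (hcov : ∀ c, r a c → r c b → c = a ∨ c = b) (hba : b < a) :
    ∀ x, r x b → b < x → r x a := by
  obtain ⟨hrefl, hanti, htrans, hg, hchain, hdown, hantichain⟩ := htree
  set D : Fin n → Finset (Fin n) := fun t => Finset.univ.filter (fun j => r j t) with hD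
  have hDmem : ∀ t y, y ∈ D t ↔ r y t := by intro t y; simp [hD]
  set F : Finset (Fin n) := (D b).filter (fun x => b < x) with hF
  have hFmem : ∀ y, y ∈ F ↔ (r y b ∧ b < y) := by
    intro y; simp [hF, hDmem, Finset.mem_filter]
  have haF : a ∈ F := (hFmem a).2 ⟨hrab, hba⟩
  have hFne : F.Nonempty := ⟨a, haF⟩
  set m := F.min' hFne with hm
  have hmF : m ∈ F := F.min'_mem hFne
  have hFeq : F = (D b).filter (fun x => m ≤ x) := by
    ext y
    simp only [hF, Finset.mem_filter]
    constructor
    · rintro ⟨h1, h2⟩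
      exact ⟨h1, F.min'_le y ((hFmem y).2 ⟨(hDmem b y).1 h1, h2⟩)⟩
    · rintro ⟨h1, h2⟩
      exact ⟨h1, lt_of_lt_of_le ((hFmem m).1 hmF).2 h2⟩
  have hFB : F ∈ B := by
    rw [hFeq]
    exact hch (D b) (hdown b) m ((hDmem b m).2 ((hFmem m).1 hmF).1)
  -- for each x in F, choose the "child of b" above x
  have hchild : ∀ x : Fin n, ∃ t, x ∈ F →
      r x t ∧ r t b ∧ t ≠ b ∧ (∀ z, r t z → r z b → z ≠ b → z = t) := by
    intro x
    by_cases hx : x ∈ F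
    · obtain ⟨hxb, hbx⟩ := (hFmem x).1 hx
      set P : Finset (Fin n) := Finset.univ.filter (fun y => r x y ∧ r y b ∧ y ≠ b) with hP
      have hPmem : ∀ y, y ∈ P ↔ (r x y ∧ r y b ∧ y ≠ b) := by
        intro y; simp [hP]
      have hxP : x ∈ P := (hPmem x).2 ⟨hrefl x, hxb, ne_of_gt hbx⟩
      obtain ⟨t, htP, htmax⟩ := P.exists_max_image (fun y => w.symm y) ⟨x, hxP⟩
      obtain ⟨ht1, ht2, ht3⟩ := (hPmem t).1 htP
      have hmax : ∀ y ∈ P, r y t := by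
        intro y hy
        obtain ⟨hy1, hy2, hy3⟩ := (hPmem y).1 hy
        rcases hchain x y t hy1 ht1 with h | h
        · exact h
        · have h1 : w.symm t ≤ w.symm y := hle (w.symm t) (w.symm y) (by simpa using h)
          have h2 : w.symm y ≤ w.symm t := htmax y hy
          have : y = t := by
            have := le_antisymm h2 h1
            simpa using congrArg w this
          rw [this]; exact hrefl t
      refine ⟨t, fun _ => ⟨ht1, ht2, ht3, ?_⟩⟩
      intro z hz1 hz2 hz3
      exact hanti z t (hmax z ((hPmem z).2 ⟨htrans x t z ht1 hz1, hz2, hz3⟩)) hz1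
    · exact ⟨x, fun h => absurd h hx⟩
  choose c hc using hchild
  set C : Finset (Fin n) := F.image c with hC
  have hca : c a = a := by
    obtain ⟨h1, h2, h3, _⟩ := hc a haF
    rcases hcov (c a) h1 h2 with h | h
    · exact h
    · exact absurd h h3
  have haC : a ∈ C := hca ▸ Finset.mem_image_of_mem c haF
  have hcmem : ∀ t ∈ C, ∃ x ∈ F, c x = t := by
    intro t ht; exact Finset.mem_image.1 ht
  -- the union of F with the downsets of elements of C is in B
  have hunion : ∀ (C' : Finset (Fin n)), (∀ t ∈ C', (F ∩ D t).Nonempty) →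
      F ∪ C'.biUnion D ∈ B := by
    intro C'
    induction C' using Finset.induction_on with
    | empty => intro _; simpa using hFB
    | @insert t C'' hnot ih =>
      intro hmeet
      have h1 : F ∪ C''.biUnion D ∈ B := ih (fun s hs => hmeet s (Finset.mem_insert_of_mem hs))
      have h3 : ((F ∪ C''.biUnion D) ∩ D t).Nonempty := by
        obtain ⟨y, hy⟩ := hmeet t (Finset.mem_insert_self t C'')
        exact ⟨y, Finset.mem_inter.2 ⟨Finset.mem_union_left _ (Finset.mem_inter.1 hy).1,
          (Finset.mem_inter.1 hy).2⟩⟩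
      have hres := hB.2.1 _ h1 _ (hdown t) h3
      have : (F ∪ C''.biUnion D) ∪ D t = F ∪ (insert t C'').biUnion D := by
        rw [Finset.biUnion_insert]
        ext y
        simp only [Finset.mem_union]
        tauto
      rwa [this] at hres
  have hmeetC : ∀ t ∈ C, (F ∩ D t).Nonempty := by
    intro t ht
    obtain ⟨x, hxF, hxc⟩ := hcmem t ht
    exact ⟨x, Finset.mem_inter.2 ⟨hxF, (hDmem t x).2 (hxc ▸ (hc x hxF).1)⟩⟩
  have hFsub : F ⊆ C.biUnion D := by
    intro x hx
    exact Finset.mem_biUnion.2 ⟨c x, Finset.mem_image_of_mem c hx,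
      (hDmem (c x) x).2 (hc x hx).1⟩
  have hVB : C.biUnion D ∈ B := by
    have := hunion C hmeetC
    rwa [Finset.union_eq_right.2 hFsub] at this
  -- elements of C are pairwise incomparable covers of b
  have hCcard : C.card ≤ 1 := by
    by_contra hcard
    push_neg at hcard
    refine hantichain C hcard ?_ (by rw [hD] at hVB; exact hVB)
    intro t1 ht1 t2 ht2 htne
    obtain ⟨x1, hx1F, hx1c⟩ := hcmem t1 ht1
    obtain ⟨x2, hx2F, hx2c⟩ := hcmem t2 ht2
    obtain ⟨_, hb1, hnb1, hcov1⟩ := hc x1 hx1F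
    obtain ⟨_, hb2, hnb2, hcov2⟩ := hc x2 hx2F
    rw [hx1c] at hb1 hnb1 hcov1
    rw [hx2c] at hb2 hnb2 hcov2
    constructor
    · intro h; exact htne ((hcov1 t2 h hb2 hnb2).symm)
    · intro h; exact htne (hcov2 t1 h hb1 hnb1)
  have hCa : ∀ t ∈ C, t = a := fun t ht => Finset.card_le_one.mp hCcard t ht a haC
  intro x hxb hbx
  have hxF : x ∈ F := (hFmem x).2 ⟨hxb, hbx⟩
  have := hCa (c x) (Finset.mem_image_of_mem c hxF)
  have hxc := (hc x hxF).1
  rwa [this] at hxc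


/-- For a connected chordal building set `B`, a `B`-tree `≼` and its
lexicographically minimal linear extension `w`, the descents of `w`
coincide with the descents of the tree: `(a,b)` is a pair of consecutive
entries `a = w(i) > w(i+1) = b` if and only if `a ⋖ b` is a covering
relation of `≼` with `a > b`. -/
theorem des_lexmin_eq_des_btree (n : ℕ) (hn : 1 ≤ n)
    (B : Finset (Finset (Fin n))) (hB : IsBuildingSet B)
    (hconn : (Finset.univ : Finset (Fin n)) ∈ B) (hch : IsChordal B)
    (r : Fin n → Fin n → Prop) (htree : IsBTreeRel B r)
    (w : Equiv.Perm (Fin n)) (hw : IsLexMinLinExt r w) :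
    ∀ a b : Fin n,
      ((∃ i j : Fin n, (i : ℕ) + 1 = (j : ℕ) ∧ w i = a ∧ w j = b) ∧ b < a)
      ↔ ((r a b ∧ a ≠ b ∧ ∀ c : Fin n, r a c → r c b → c = a ∨ c = b) ∧ b < a) := by

  obtain ⟨hrefl, hanti, htrans, hg, hchain, hdown, hantichain⟩ := htree
  have htree' : IsBTreeRel B r := ⟨hrefl, hanti, htrans, hg, hchain, hdown, hantichain⟩
  obtain ⟨hle, hmin⟩ := hw
  have hw' : IsLexMinLinExt r w := ⟨hle, hmin⟩
  intro a b
  constructor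
  · -- forward direction: a descent of w is a descent of the tree
    rintro ⟨⟨i, j, hij, ha, hb⟩, hba⟩
    have hrab : r a b := by
      by_contra hnrab
      set u : Equiv.Perm (Fin n) := (Equiv.swap i j).trans w with hu
      have hua : ∀ p, u p = w (Equiv.swap i j p) := fun p => rfl
      have hui : u i = b := by rw [hua, Equiv.swap_apply_left, hb]
      have huj : u j = a := by rw [hua, Equiv.swap_apply_right, ha]
      have hulin : IsLinExt r u := by
        intro p q hpq
        rw [hua, hua] at hpq
        have hττ : (Equiv.swap i j p : ℕ) ≤ (Equiv.swap i j q : ℕ) := hle _ _ hpq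
        by_contra hqp
        have hqp : (q : ℕ) < p := Fin.lt_def.mp (lt_of_not_ge hqp)
        have hsw : ∀ p' : Fin n, (p' = i ∧ Equiv.swap i j p' = j) ∨
            (p' = j ∧ Equiv.swap i j p' = i) ∨ (p' ≠ i ∧ p' ≠ j ∧ Equiv.swap i j p' = p') := by
          intro p'
          by_cases h1 : p' = i
          · left; exact ⟨h1, by rw [h1, Equiv.swap_apply_left]⟩
          · by_cases h2 : p' = j
            · right; left; exact ⟨h2, by rw [h2, Equiv.swap_apply_right]⟩
            · right; right; exact ⟨h1, h2, Equiv.swap_apply_of_ne_of_ne h1 h2⟩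
        have hij' : (i:ℕ) + 1 = j := hij
        rcases hsw p with ⟨hp1, hp2⟩ | ⟨hp1, hp2⟩ | ⟨hp1, hp2, hp3⟩ <;>
          rcases hsw q with ⟨hq1, hq2⟩ | ⟨hq1, hq2⟩ | ⟨hq1, hq2, hq3⟩
        · exact absurd (hp1.trans hq1.symm) (ne_of_gt (Fin.lt_def.2 hqp))
        · have e1 := congrArg Fin.val hp1; have e2 := congrArg Fin.val hq1
          omega
        · have e1 := congrArg Fin.val hp1
          have e2 := congrArg Fin.val hp2; have e3 := congrArg Fin.val hq3
          have e4 : (q:ℕ) ≠ i := fun hh => hq1 (Fin.ext hh)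
          have e5 : (q:ℕ) ≠ j := fun hh => hq2 (Fin.ext hh)
          omega
        · -- p = j, q = i : this is r a b
          rw [hp1, hq1, Equiv.swap_apply_right, Equiv.swap_apply_left, ha, hb] at hpq
          exact hnrab hpq
        · exact absurd (hp1.trans hq1.symm) (ne_of_gt (Fin.lt_def.2 hqp))
        · have e1 := congrArg Fin.val hp1
          have e2 := congrArg Fin.val hp2; have e3 := congrArg Fin.val hq3
          have e4 : (q:ℕ) ≠ i := fun hh => hq1 (Fin.ext hh)
          have e5 : (q:ℕ) ≠ j := fun hh => hq2 (Fin.ext hh)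
          omega
        · have e1 := congrArg Fin.val hq1; have e2 := congrArg Fin.val hq2
          have e3 := congrArg Fin.val hp3
          have e4 : (p:ℕ) ≠ i := fun hh => hp1 (Fin.ext hh)
          have e5 : (p:ℕ) ≠ j := fun hh => hp2 (Fin.ext hh)
          omega
        · have e1 := congrArg Fin.val hq1; have e2 := congrArg Fin.val hq2
          have e3 := congrArg Fin.val hp3
          have e4 : (p:ℕ) ≠ j := fun hh => hp2 (Fin.ext hh)
          omega
        · have e3 := congrArg Fin.val hp3; have e4 := congrArg Fin.val hq3
          omega
      rcases hmin u hulin with heq | ⟨m, hpre, hlt'⟩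
      · have : w i = u i := congrFun (congrArg _ heq) i
        rw [hui, ha] at this
        exact absurd this (ne_of_gt hba)
      · rcases lt_trichotomy m i with hmi | hmi | hmi
        · have hmj : m ≠ j := by
            intro hh
            rw [hh] at hmi
            have h1 : (j:ℕ) < i := Fin.lt_def.1 hmi
            have h2 : (i:ℕ) + 1 = j := hij
            omega
          have : u m = w m := by
            rw [hua, Equiv.swap_apply_of_ne_of_ne (ne_of_lt hmi) hmj]
          rw [this] at hlt'
          exact lt_irrefl _ hlt'
        · rw [hmi, hui, ha] at hlt'
          exact lt_asymm hba hlt'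
        · have : w i = u i := hpre i hmi
          rw [hui, ha] at this
          exact absurd this (ne_of_gt hba)
    refine ⟨⟨hrab, ne_of_gt hba, ?_⟩, hba⟩
    intro c hac hcb
    have h1 : i ≤ w.symm c := by
      have := hle i (w.symm c) (by rwa [ha, Equiv.apply_symm_apply]); exact this
    have h2 : w.symm c ≤ j := by
      have := hle (w.symm c) j (by rwa [hb, Equiv.apply_symm_apply]); exact this
    have h1' : (i:ℕ) ≤ w.symm c := h1
    have h2' : (w.symm c : ℕ) ≤ j := h2
    rcases (by omega : (w.symm c : ℕ) = i ∨ (w.symm c : ℕ) = j) with h | h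
    · left
      have : w.symm c = i := Fin.ext h
      rw [← ha, ← this, Equiv.apply_symm_apply]
    · right
      have : w.symm c = j := Fin.ext h
      rw [← hb, ← this, Equiv.apply_symm_apply]
  · -- backward direction
    rintro ⟨⟨hrab, hne, hcov⟩, hba⟩
    refine ⟨?_, hba⟩
    set i := w.symm a with hi
    set j := w.symm b with hj
    have hwi : w i = a := by rw [hi, Equiv.apply_symm_apply]
    have hwj : w j = b := by rw [hj, Equiv.apply_symm_apply]
    have hij : i < j := linext_lt hle hrab hne
    have hK := chordal_cover hB hch htree' hle hrab hne hcov hba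
    have claim1 : ∀ N : ℕ, ∀ x, (w.symm x : ℕ) < N → r x b → x ≠ b → ¬ r x a →
        w.symm x < i := by
      intro N
      induction N with
      | zero => intro x h; exact absurd h (Nat.not_lt_zero _)
      | succ N ih =>
        intro x hN hxb hxnb hxna
        have hxltb : x < b := by
          rcases lt_trichotomy x b with h | h | h
          · exact h
          · exact absurd h hxnb
          · exact absurd (hK x hxb h) hxna
        have hdesc : ∀ y, r y x → y ≠ x → w.symm y < i := by
          intro y hyx hynx
          have hyb : r y b := htrans y x b hyx hxb
          have hynb : y ≠ b := by
            intro h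
            rw [h] at hyx
            exact hxnb (hanti x b hxb hyx)
          have hyna : ¬ r y a := by
            intro hya
            rcases hchain y x a hyx hya with h | h
            · exact hxna h
            · rcases hcov x h hxb with h' | h'
              · exact hxna (h' ▸ hrefl a)
              · exact hxnb h'
          have hlty : w.symm y < w.symm x := linext_lt hle hyx hynx
          exact ih y (by omega) hyb hynb hyna
        exact greedy hw' x i hdesc (by rw [hwi]; exact lt_trans hxltb hba)
    have hjn : (i:ℕ) + 1 < n := by
      have := hij
      have h1 : (i:ℕ) < j := this
      have h2 : (j:ℕ) < n := j.isLt
      omega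
    set i' : Fin n := ⟨(i:ℕ) + 1, hjn⟩ with hi'
    have hii' : i < i' := by rw [Fin.lt_def]; simp [hi']
    have hdescb : ∀ y, r y b → y ≠ b → w.symm y < i' := by
      intro y hyb hynb
      by_cases hya : r y a
      · have : w.symm y ≤ i := by
          have := linext_le hle hya; rwa [← hi] at this
        exact lt_of_le_of_lt this hii'
      · exact lt_trans (claim1 ((w.symm y : ℕ) + 1) y (by omega) hyb hynb hya) hii'
    have hwi' : w i' = b := by
      by_contra hcb
      have hc_lt_b : w i' < b := by
        rcases lt_trichotomy (w i') b with h | h | h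
        · exact h
        · exact absurd h hcb
        · exfalso
          have := greedy hw' b i' hdescb h
          rw [← hj] at this
          have h1 : (j:ℕ) < (i:ℕ) + 1 := this
          have h2 : (i:ℕ) < j := hij
          omega
      have hnotall : ¬ (∀ y, r y (w i') → y ≠ (w i') → w.symm y < i) := by
        intro hall
        have := greedy hw' (w i') i hall (by rw [hwi]; exact lt_trans hc_lt_b hba)
        rw [Equiv.symm_apply_apply] at this
        have h1 : (i':ℕ) < i := this
        have h2 : (i:ℕ) < i' := hii'
        omega
      push_neg at hnotall
      obtain ⟨y, hy1, hy2, hy3⟩ := hnotall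
      have hylt : w.symm y < i' := by
        have := linext_lt hle hy1 hy2
        rwa [Equiv.symm_apply_apply] at this
      have hyi : w.symm y = i := by
        apply Fin.ext
        have h1 : (w.symm y : ℕ) < (i:ℕ) + 1 := hylt
        have h2 : (i:ℕ) ≤ w.symm y := hy3
        omega
      have hay : y = a := by
        have : w (w.symm y) = w i := congrArg w hyi
        rwa [Equiv.apply_symm_apply, hwi] at this
      rw [hay] at hy1 hy2
      rcases hchain a (w i') b hy1 hrab with h | h
      · rcases hcov (w i') hy1 h with h' | h'
        · exact hy2 h'.symm
        · exact hcb h'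
      · have hbne : b ≠ w i' := fun hh => hcb hh.symm
        have := linext_lt hle h hbne
        rw [Equiv.symm_apply_apply, ← hj] at this
        have h1 : (j:ℕ) < (i:ℕ) + 1 := this
        have h2 : (i:ℕ) < j := hij
        omega
    exact ⟨i, i', by simp [hi'], hwi, hwi'⟩
end

section
/- Let B be a chordal building set on [n]. Then a permutation w ∈ S_n belongs to S_n(B) if and only if for every a ∈ [n] there exists I ∈ B such that a ∈ I, max{w↖a} ∈ I, and I ⊆ {w↖a}, where {w↖a} := {w(j) : j ≤ w^{-1}(a) and w(j) ≥ a} is the set of entries of w that occur weakly to the left of a and are greater than or equal to a. -/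
open Classical

/-- The set `{w ↖ a}` of entries of `w` occurring weakly to the left of `a`
and greater than or equal to `a`. -/
def leftUpper {n : ℕ} (w : Equiv.Perm (Fin n)) (a : Fin n) : Finset (Fin n) :=
  ((Finset.univ.filter fun j => j ≤ w.symm a).image w).filter fun x => a ≤ x

/-- For a chordal building set `B` on `[n]`, `w` is a `B`-permutation iff for
every `a` there is `I ∈ B` with `a ∈ I`, `max {w ↖ a} ∈ I`, and
`I ⊆ {w ↖ a}`. -/
theorem bperm_iff_leftUpper (n : ℕ) (B : Finset (Finset (Fin n)))
    (hB : IsBuildingSet B) (hch : IsChordal B) (w : Equiv.Perm (Fin n)) :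
    IsBPerm B w ↔
      ∀ a : Fin n, ∃ I ∈ B, a ∈ I ∧ I ⊆ leftUpper w a ∧
        ∃ m ∈ I, ∀ x ∈ leftUpper w a, x ≤ m := by
  have hLU : ∀ a : Fin n, leftUpper w a = (prefixSet w (w.symm a)).filter (fun x => a ≤ x) :=
    fun a => rfl
  have hmemP : ∀ (i : Fin n), w i ∈ prefixSet w i := by
    intro i
    simp only [prefixSet, Finset.mem_image, Finset.mem_filter, Finset.mem_univ, true_and]
    exact ⟨i, le_refl i, rfl⟩
  constructor
  · intro h a
    obtain ⟨I, hI, hsub, hwI, m, hmI, hmax⟩ := h (w.symm a)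
    have ha : w (w.symm a) = a := w.apply_symm_apply a
    rw [ha] at hwI
    have haP : a ∈ prefixSet w (w.symm a) := by have := hmemP (w.symm a); rwa [ha] at this
    have ham : a ≤ m := hmax a haP
    refine ⟨I.filter (fun x => a ≤ x), hch I hI a hwI, ?_, ?_, m, ?_, ?_⟩
    · exact Finset.mem_filter.2 ⟨hwI, le_refl a⟩
    · intro x hx
      obtain ⟨hxI, hax⟩ := Finset.mem_filter.1 hx
      rw [hLU]
      exact Finset.mem_filter.2 ⟨hsub hxI, hax⟩
    · exact Finset.mem_filter.2 ⟨hmI, ham⟩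
    · intro x hx
      rw [hLU] at hx
      exact hmax x (Finset.mem_filter.1 hx).1
  · intro h i
    obtain ⟨I, hI, haI, hsub, m, hmI, hmax⟩ := h (w i)
    have hsi : w.symm (w i) = i := w.symm_apply_apply i
    have hsub' : I ⊆ prefixSet w i := by
      intro x hx
      have := hsub hx
      rw [hLU, hsi] at this
      exact (Finset.mem_filter.1 this).1
    refine ⟨I, hI, hsub', haI, m, hmI, ?_⟩
    have haLU : w i ∈ leftUpper w (w i) := by
      rw [hLU, hsi]
      exact Finset.mem_filter.2 ⟨hmemP i, le_refl _⟩
    have ham : w i ≤ m := hmax _ haLU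
    intro x hx
    rcases le_or_gt (w i) x with h1 | h1
    · refine hmax x ?_
      rw [hLU, hsi]
      exact Finset.mem_filter.2 ⟨hx, h1⟩
    · exact le_trans h1.le ham
end

section
/- Let ≼ be a partial order on [n] and let w be its lexicographically minimal linear extension. Then every descent of w is a covering relation of ≼: for every i ∈ {1,…,n−1}, if w(i) > w(i+1) as integers, then w(i) ⋖ w(i+1) is a covering relation of ≼ (in particular w(i) ≺ w(i+1)). -/
/-- Let `≼` be a partial order on `[n]` and `w` its lexicographically minimal
linear extension.  Then every descent of `w` is a covering relation of `≼`:
if `w(i) > w(i+1)` then `w(i) ⋖ w(i+1)`. -/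
theorem descent_of_lexmin_is_cover (n : ℕ) (r : Fin n → Fin n → Prop)
    (hrefl : ∀ a, r a a) (hantisymm : ∀ a b, r a b → r b a → a = b)
    (htrans : ∀ a b c, r a b → r b c → r a c)
    (w : Equiv.Perm (Fin n)) (hw : IsLexMinLinExt r w) :
    ∀ i j : Fin n, (i : ℕ) + 1 = (j : ℕ) → w j < w i →
      r (w i) (w j) ∧ w i ≠ w j ∧
        ∀ c : Fin n, r (w i) c → r c (w j) → c = w i ∨ c = w j := by
  intro i j hij hlt
  have hij' : i < j := by rw [Fin.lt_def]; omega
  have hne : i ≠ j := ne_of_lt hij'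
  have hlin := hw.1
  have hr : r (w i) (w j) := by
    by_contra hnr
    set u : Equiv.Perm (Fin n) := w * Equiv.swap i j with hu
    have hui : u i = w j := by
      simp [hu, Equiv.Perm.mul_apply, Equiv.swap_apply_left]
    have huj : u j = w i := by
      simp [hu, Equiv.Perm.mul_apply, Equiv.swap_apply_right]
    have huo : ∀ a : Fin n, a ≠ i → a ≠ j → u a = w a := by
      intro a h1 h2
      simp [hu, Equiv.Perm.mul_apply, Equiv.swap_apply_of_ne_of_ne h1 h2]
    have hule : IsLinExt r u := by
      intro a b hab
      rcases eq_or_ne a i with hai | hai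
      · rcases eq_or_ne b i with hbi | hbi
        · rw [hai, hbi]
        · rcases eq_or_ne b j with hbj | hbj
          · rw [hai, hbj]; exact le_of_lt hij'
          · rw [hai, hui, huo b hbi hbj] at hab
            rw [hai]
            exact le_trans (le_of_lt hij') (hlin _ _ hab)
      · rcases eq_or_ne a j with haj | haj
        · rcases eq_or_ne b i with hbi | hbi
          · rw [haj, hbi, huj, hui] at hab
            exact absurd hab hnr
          · rcases eq_or_ne b j with hbj | hbj
            · rw [haj, hbj]
            · rw [haj, huj, huo b hbi hbj] at hab
              rw [haj]
              have h1 := hlin _ _ hab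
              have h2 : (b : ℕ) ≠ (i : ℕ) := fun h => hbi (Fin.ext h)
              rw [Fin.le_def] at h1 ⊢
              omega
        · rcases eq_or_ne b i with hbi | hbi
          · rw [hbi, huo a hai haj, hui] at hab
            rw [hbi]
            have h1 := hlin _ _ hab
            have h2 : (a : ℕ) ≠ (j : ℕ) := fun h => haj (Fin.ext h)
            rw [Fin.le_def] at h1 ⊢
            omega
          · rcases eq_or_ne b j with hbj | hbj
            · rw [hbj, huo a hai haj, huj] at hab
              rw [hbj]
              have h1 := hlin _ _ hab
              rw [Fin.le_def] at h1 ⊢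
              omega
            · rw [huo a hai haj, huo b hbi hbj] at hab
              exact hlin _ _ hab
    rcases hw.2 u hule with heq | ⟨m, hm1, hm2⟩
    · have h := hui
      rw [← heq] at h
      exact absurd h hlt.ne'
    · rcases lt_trichotomy m i with hmi | hmi | hmi
      · have h1 : m ≠ i := ne_of_lt hmi
        have h2 : m ≠ j := ne_of_lt (lt_trans hmi hij')
        rw [huo m h1 h2] at hm2
        exact absurd hm2 (lt_irrefl _)
      · subst hmi
        rw [hui] at hm2
        exact absurd hm2 (asymm hlt)
      · have := hm1 i hmi
        rw [hui] at this
        exact absurd this hlt.ne'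
  refine ⟨hr, hlt.ne', ?_⟩
  intro c h1 h2
  have hc : w (w.symm c) = c := w.apply_symm_apply c
  rw [← hc] at h1 h2
  have hik := hlin _ _ h1
  have hkj := hlin _ _ h2
  rw [Fin.le_def] at hik hkj
  have : w.symm c = i ∨ w.symm c = j := by
    rcases Nat.eq_or_lt_of_le hik with h | h
    · exact Or.inl (Fin.ext h.symm)
    · exact Or.inr (Fin.ext (by omega))
  rcases this with h | h
  · left; rw [← hc, h]
  · right; rw [← hc, h]
end

section
/- Let ≼ be a partial order on [n] ( n ≥ 1 ) with a greatest element such that for every i the up-set {j : i ≼ j} is totally ordered (a rooted-tree poset), and let w be its lexicographically minimal linear extension. Then for every i ∈ {1,…,n}, letting S_i = {w(1),…,w(i)} and letting K be the connected component containing max{w(1),…,w(i)} of the comparability graph of ≼ restricted to S_i, the set K has a greatest element with respect to ≼ and this greatest element equals w(i). -/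
open Classical

/-- The edge relation of the comparability graph of `r` restricted to the
vertex subset `S`. -/
def compEdge {n : ℕ} (r : Fin n → Fin n → Prop) (S : Finset (Fin n))
    (a b : Fin n) : Prop :=
  a ∈ S ∧ b ∈ S ∧ a ≠ b ∧ (r a b ∨ r b a)

/-!
Let `m = w q` be the numerically largest element of `S_i`. By lexicographic minimality every
`w p` with `q < p ≤ i` has a `≼`-predecessor among `w q, …, w (p - 1)`: otherwise moving `w p`
forward to position `q` would give a smaller linear extension, since `w p < m`. Hence `m` is
connected to `w i` in `S_i`. Since `w i` is `≼`-maximal in `S_i` and up-sets are chains, the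
down-set of `w i` is closed under comparability edges inside `S_i`, so it contains the whole
component of `m`.
-/

open Relation

section

variable {n : ℕ} {r : Fin n → Fin n → Prop} {w : Equiv.Perm (Fin n)}

lemma mem_prefixSet_iff {i x : Fin n} : x ∈ prefixSet w i ↔ w.symm x ≤ i := by
  simp only [prefixSet, Finset.mem_image, Finset.mem_filter, Finset.mem_univ, true_and]
  exact ⟨by rintro ⟨j, hj, rfl⟩; simpa using hj,
    fun h => ⟨w.symm x, h, w.apply_symm_apply x⟩⟩

lemma apply_mem_prefixSet_iff {i j : Fin n} : w j ∈ prefixSet w i ↔ j ≤ i := by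
  simp [mem_prefixSet_iff]

instance compEdge.instSymm {S : Finset (Fin n)} : Std.Symm (compEdge r S) where
  symm _ _ := fun ⟨ha, hb, hab, hr⟩ => ⟨hb, ha, hab.symm, hr.symm⟩

lemma Fin.val_cycleIcc {q p : Fin n} (hqp : q ≤ p) (x : Fin n) :
    (Fin.cycleIcc q p x : ℕ) =
      if x < q ∨ p < x then (x : ℕ) else if x = p then (q : ℕ) else x + 1 := by
  have : NeZero n := ⟨x.pos.ne'⟩
  rcases lt_or_ge x q with hxq | hqx
  · simp [Fin.cycleIcc_of_lt hxq, hxq]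
  rcases lt_or_ge p x with hpx | hxp
  · simp [Fin.cycleIcc_of_gt hpx, hpx]
  rw [Fin.cycleIcc_of_le_of_le hqx hxp]
  split_ifs <;> first | omega | simp_all [Fin.val_add_one_of_lt' (by omega : (x : ℕ) + 1 < n)]

/-- `w * (cycleIcc q p)⁻¹` is `w` with the entry at position `p` moved forward to
position `q`. -/
lemma IsLinExt.mul_cycleIcc_inv (hw : IsLinExt r w) {q p : Fin n} (hqp : q ≤ p)
    (hp : ∀ k, q ≤ k → k < p → ¬ r (w k) (w p)) :
    IsLinExt r (w * (Fin.cycleIcc q p)⁻¹) := by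
  suffices h : ∀ k l, r (w k) (w l) → Fin.cycleIcc q p k ≤ Fin.cycleIcc q p l by
    intro a b hab
    simpa using h _ _ hab
  intro k l hkl
  have hle := hw k l hkl
  have hlp : l = p → k = p ∨ k < q := fun hl => by
    subst hl
    by_contra! hk
    exact hp k hk.2 (lt_of_le_of_ne hle hk.1) hkl
  rw [Fin.le_def, Fin.val_cycleIcc hqp, Fin.val_cycleIcc hqp]
  rw [Fin.le_def] at hle hqp
  simp only [Fin.lt_def, Fin.ext_iff] at hlp ⊢
  split_ifs <;> omega

/-- Otherwise moving `w p` forward to position `q` would give a lexicographically smaller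
linear extension. -/
lemma IsLexMinLinExt.exists_rel_of_apply_lt (hw : IsLexMinLinExt r w) {q p : Fin n}
    (hqp : q < p) (hlt : w p < w q) : ∃ k, q ≤ k ∧ k < p ∧ r (w k) (w p) := by
  by_contra! hp
  have : NeZero n := ⟨q.pos.ne'⟩
  set u := w * (Fin.cycleIcc q p)⁻¹
  have huq : u q = w p := by
    simp [u, Equiv.symm_apply_eq, Fin.cycleIcc_of_last hqp.le]
  have hu_lt : ∀ j < q, u j = w j := fun j hj => by
    simp [u, Equiv.symm_apply_eq, Fin.cycleIcc_of_lt hj]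
  have hqp' : w q ≠ w p := w.injective.ne hqp.ne
  rcases hw.2 u (hw.1.mul_cycleIcc_inv hqp.le hp) with heq | ⟨k, hagree, hk⟩
  · exact hqp' (heq ▸ huq)
  rcases lt_trichotomy k q with hkq | rfl | hqk
  · exact (hu_lt k hkq ▸ hk).false
  · exact (huq ▸ hk).asymm hlt
  · exact hqp' (huq ▸ hagree q hqk)

lemma IsLexMinLinExt.reflTransGen_compEdge (hw : IsLexMinLinExt r w) {q i : Fin n}
    (hmax : ∀ j ≤ i, w j ≤ w q) {p : Fin n} (hqp : q ≤ p) (hpi : p ≤ i) :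
    ReflTransGen (compEdge r (prefixSet w i)) (w q) (w p) := by
  induction p using WellFoundedLT.induction with
  | _ p ih =>
  rcases hqp.eq_or_lt with rfl | hqp
  · exact .refl
  have hlt : w p < w q := (hmax p hpi).lt_of_ne (w.injective.ne hqp.ne')
  obtain ⟨k, hqk, hkp, hkr⟩ := hw.exists_rel_of_apply_lt hqp hlt
  have hki : k ≤ i := hkp.le.trans hpi
  exact (ih k hkp hqk hki).tail
    ⟨apply_mem_prefixSet_iff.2 hki, apply_mem_prefixSet_iff.2 hpi, w.injective.ne hkp.ne,
      .inl hkr⟩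

lemma IsLinExt.eq_of_mem_prefixSet_of_rel {i : Fin n} (hw : IsLinExt r w) {b : Fin n}
    (hb : b ∈ prefixSet w i) (hib : r (w i) b) : b = w i := by
  rw [mem_prefixSet_iff] at hb
  rw [← w.apply_symm_apply b, le_antisymm hb (hw i _ (by simpa using hib))]

lemma rel_of_reflTransGen_compEdge (hrefl : ∀ a, r a a)
    (htrans : ∀ a b c, r a b → r b c → r a c)
    (hupsets : ∀ a b c, r a b → r a c → r b c ∨ r c b)
    {S : Finset (Fin n)} {t : Fin n} (ht : ∀ b ∈ S, r t b → b = t) {x y : Fin n}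
    (hxy : ReflTransGen (compEdge r S) x y) (hx : r x t) : r y t := by
  induction hxy with
  | refl => exact hx
  | tail _ hbc ih =>
    obtain ⟨-, hc, -, hbc | hcb⟩ := hbc
    · rcases hupsets _ _ _ hbc ih with hct | htc
      · exact hct
      · exact ht _ hc htc ▸ hrefl _
    · exact htrans _ _ _ hcb ih

end

theorem lexmin_backward_construction_general (n : ℕ)
    (r : Fin n → Fin n → Prop)
    (hrefl : ∀ a, r a a)
    (htrans : ∀ a b c, r a b → r b c → r a c)
    (hupsets : ∀ a b c, r a b → r a c → r b c ∨ r c b)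
    (w : Equiv.Perm (Fin n)) (hw : IsLexMinLinExt r w) :
    ∀ i : Fin n, ∀ m : Fin n, m ∈ prefixSet w i →
      (∀ x ∈ prefixSet w i, x ≤ m) →
      (w i ∈ prefixSet w i ∧
       Relation.ReflTransGen (compEdge r (prefixSet w i)) m (w i) ∧
       ∀ x ∈ prefixSet w i,
         Relation.ReflTransGen (compEdge r (prefixSet w i)) m x → r x (w i)) := by
  intro i m hm hmax
  obtain ⟨q, hqi, rfl⟩ : ∃ q ≤ i, w q = m := ⟨w.symm m, mem_prefixSet_iff.1 hm, by simp⟩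
  have hpath : ReflTransGen (compEdge r (prefixSet w i)) (w q) (w i) :=
    hw.reflTransGen_compEdge (fun j hj => hmax _ (apply_mem_prefixSet_iff.2 hj)) hqi le_rfl
  have hclosed : ∀ {x y}, ReflTransGen (compEdge r (prefixSet w i)) x y →
      r x (w i) → r y (w i) :=
    rel_of_reflTransGen_compEdge hrefl htrans hupsets fun _ hb => hw.1.eq_of_mem_prefixSet_of_rel hb
  have hq : r (w q) (w i) := hclosed (Std.Symm.symm _ _ hpath) (hrefl _)
  exact ⟨apply_mem_prefixSet_iff.2 le_rfl, hpath, fun x _ hx => hclosed hx hq⟩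

/-- Let `≼` be a rooted-tree poset on `[n]` (a partial order with a greatest
element whose up-sets are totally ordered) and `w` its lexicographically
minimal linear extension.  For each `i`, let `S_i = {w(1),…,w(i)}` and let `K`
be the connected component of the comparability graph of `≼` restricted to
`S_i` containing `max S_i`.  Then `K` has a `≼`-greatest element, and this
greatest element is `w(i)`. -/
theorem lexmin_backward_construction (n : ℕ) (hn : 1 ≤ n)
    (r : Fin n → Fin n → Prop)
    (hrefl : ∀ a, r a a) (hantisymm : ∀ a b, r a b → r b a → a = b)
    (htrans : ∀ a b c, r a b → r b c → r a c)
    (hgreatest : ∃ g, ∀ a, r a g)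
    (hupsets : ∀ a b c, r a b → r a c → r b c ∨ r c b)
    (w : Equiv.Perm (Fin n)) (hw : IsLexMinLinExt r w) :
    ∀ i : Fin n, ∀ m : Fin n, m ∈ prefixSet w i →
      (∀ x ∈ prefixSet w i, x ≤ m) →
      (w i ∈ prefixSet w i ∧
       Relation.ReflTransGen (compEdge r (prefixSet w i)) m (w i) ∧
       ∀ x ∈ prefixSet w i,
         Relation.ReflTransGen (compEdge r (prefixSet w i)) m x → r x (w i)) :=
  lexmin_backward_construction_general n r hrefl htrans hupsets w hw
end

section
/- Let G be a simple graph on vertex set [n]. Then the graphical building set B(G) is chordal if and only if G is a perfectly labelled chordal graph, i.e., for all i < j < k in [n], if {i,j} and {i,k} are edges of G then {j,k} is an edge of G. -/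
open Classical

/-- The graphical building set of a graph `G` on `[n]`: all nonempty subsets
`I` such that the induced subgraph `G|_I` is connected. -/
def graphicalBuilding {n : ℕ} (G : SimpleGraph (Fin n)) : Set (Finset (Fin n)) :=
  {I | I.Nonempty ∧ (G.induce (I : Set (Fin n))).Connected}

/-- A collection of subsets of `[n]` is chordal if for every member `I` and
every `m ∈ I`, the set `{i ∈ I : i ≥ m}` is also a member. -/
def IsChordalSet {n : ℕ} (B : Set (Finset (Fin n))) : Prop :=
  ∀ I ∈ B, ∀ m ∈ I, I.filter (fun i => m ≤ i) ∈ B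

section Aux

variable {n : ℕ} {G : SimpleGraph (Fin n)}

/-- From a walk in `G` with support inside `S`, reachability in the induced graph. -/
lemma walk_to_reachable {S : Set (Fin n)} :
    ∀ {a b : Fin n} (w : G.Walk a b), (∀ x ∈ w.support, x ∈ S) →
      ∀ (ha : a ∈ S) (hb : b ∈ S), (G.induce S).Reachable ⟨a, ha⟩ ⟨b, hb⟩ := by
  intro a b w
  induction w with
  | nil => intro _ ha hb; rfl
  | @cons u c d h p ih =>
    intro hs ha hb
    have hc : c ∈ S := hs c (by simp [SimpleGraph.Walk.support_cons])
    have h1 : (G.induce S).Adj ⟨u, ha⟩ ⟨c, hc⟩ := h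
    exact (SimpleGraph.Adj.reachable h1).trans
      (ih (fun x hx => hs x (by simp [SimpleGraph.Walk.support_cons, hx])) hc hb)

/-- From reachability in the induced graph, a walk in `G` with support inside `S`. -/
lemma reachable_to_walk {S : Set (Fin n)} {a b : Fin n} {ha : a ∈ S} {hb : b ∈ S}
    (h : (G.induce S).Reachable ⟨a, ha⟩ ⟨b, hb⟩) :
    ∃ w : G.Walk a b, ∀ x ∈ w.support, x ∈ S := by
  obtain ⟨p⟩ := h
  let f : G.induce S →g G := ⟨Subtype.val, fun h => h⟩
  refine ⟨p.map f, ?_⟩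
  intro x hx
  rw [SimpleGraph.Walk.support_map, List.mem_map] at hx
  obtain ⟨y, _, rfl⟩ := hx
  exact y.2

/-- The shortcut lemma: in a perfectly-labelled chordal graph, a walk inside `S`
between vertices `≥ m` can be replaced by a walk inside `S` all of whose
vertices are `≥ m`. -/
lemma shortcut
    (hch : ∀ i j k : Fin n, i < j → j < k → G.Adj i j → G.Adj i k → G.Adj j k)
    {S : Set (Fin n)} {m : Fin n} :
    ∀ (L : ℕ) {a b : Fin n} (w : G.Walk a b), w.length ≤ L →
      (∀ x ∈ w.support, x ∈ S) → m ≤ a → m ≤ b →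
      ∃ w' : G.Walk a b, ∀ x ∈ w'.support, x ∈ S ∧ m ≤ x := by
  intro L
  induction L with
  | zero =>
    intro a b w hL hS hma hmb
    have hnil : w.length = 0 := Nat.le_zero.mp hL
    refine ⟨w, fun x hx => ⟨hS x hx, ?_⟩⟩
    have hsl : w.support.length = 1 := by
      rw [SimpleGraph.Walk.length_support, hnil]
    obtain ⟨z, hz⟩ := List.length_eq_one_iff.mp hsl
    have hxa : x = a := by
      have h1 : x = z := by simpa [hz] using hx
      have h2 : a = z := by
        have := w.start_mem_support
        simpa [hz] using this
      rw [h1, ← h2]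
    exact hxa ▸ hma
  | succ L ih =>
    intro a b w hL hS hma hmb
    by_cases hall : ∀ x ∈ w.support, m ≤ x
    · exact ⟨w, fun x hx => ⟨hS x hx, hall x hx⟩⟩
    push_neg at hall
    obtain ⟨v1, hv1, hv1m⟩ := hall
    -- v0 : minimal vertex of the support
    have hne : w.support.toFinset.Nonempty := ⟨a, by simp⟩
    obtain ⟨v0, hv0mem, hv0min⟩ :
        ∃ v0 ∈ w.support, ∀ x ∈ w.support, v0 ≤ x :=
      ⟨w.support.toFinset.min' hne, by simpa using w.support.toFinset.min'_mem hne,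
        fun x hx => w.support.toFinset.min'_le x (by simpa using hx)⟩
    have hv0m : v0 < m := lt_of_le_of_lt (hv0min v1 hv1) hv1m
    have hv0a : v0 ≠ a := fun h => absurd (h ▸ hv0m) (not_lt.mpr hma)
    have hv0b : v0 ≠ b := fun h => absurd (h ▸ hv0m) (not_lt.mpr hmb)
    -- split the walk at v0
    obtain ⟨w1, w2, hspec⟩ : ∃ (w1 : G.Walk a v0) (w2 : G.Walk v0 b), w1.append w2 = w :=
      ⟨_, _, w.take_spec hv0mem⟩
    have hsub1 : ∀ x ∈ w1.support, x ∈ w.support := by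
      intro x hx; rw [← hspec, SimpleGraph.Walk.mem_support_append_iff]; exact Or.inl hx
    have hsub2 : ∀ x ∈ w2.support, x ∈ w.support := by
      intro x hx; rw [← hspec, SimpleGraph.Walk.mem_support_append_iff]; exact Or.inr hx
    have hlen : w1.length + w2.length = w.length := by
      rw [← hspec, SimpleGraph.Walk.length_append]
    have hS1 : ∀ x ∈ w1.support, x ∈ S := fun x hx => hS x (hsub1 x hx)
    have hS2 : ∀ x ∈ w2.support, x ∈ S := fun x hx => hS x (hsub2 x hx)
    have hmin1 : ∀ x ∈ w1.support, v0 ≤ x := fun x hx => hv0min x (hsub1 x hx)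
    have hmin2 : ∀ x ∈ w2.support, v0 ≤ x := fun x hx => hv0min x (hsub2 x hx)
    clear hspec hsub1 hsub2 hv0mem hS hv1 hv1m
    -- w1 : a → v0 is nonempty; decompose from the end
    cases hrev : w1.reverse with
    | nil => exact absurd rfl (Ne.symm hv0a)
    | @cons _ x _ h1 t1 =>
      -- h1 : G.Adj v0 x, t1 : G.Walk x a
      have hxsupp : x ∈ w1.support := by
        have hx : x ∈ w1.reverse.support := by
          rw [hrev]; simp [SimpleGraph.Walk.support_cons]
        rw [SimpleGraph.Walk.support_reverse, List.mem_reverse] at hx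
        exact hx
      have hxv0 : v0 < x := lt_of_le_of_ne (hmin1 x hxsupp) h1.ne
      -- w2 : v0 → b is nonempty; decompose from the start
      cases hw2 : w2 with
      | nil => exact absurd rfl hv0b
      | @cons _ y _ h2 t2 =>
        -- h2 : G.Adj v0 y, t2 : G.Walk y b
        have hysupp : y ∈ w2.support := by
          rw [hw2]; simp [SimpleGraph.Walk.support_cons]
        have hyv0 : v0 < y := lt_of_le_of_ne (hmin2 y hysupp) h2.ne
        have hlen1 : w1.length = t1.length + 1 := by
          have := congrArg SimpleGraph.Walk.length hrev
          simpa [SimpleGraph.Walk.length_reverse] using this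
        
        have hlen2 : w2.length = t2.length + 1 := by
          rw [hw2]; simp
        -- supports of the pieces
        have hSt1 : ∀ z ∈ t1.reverse.support, z ∈ S := by
          intro z hz
          apply hS1
          have hzz : z ∈ w1.reverse.support := by
            rw [hrev, SimpleGraph.Walk.support_cons]
            exact List.mem_cons_of_mem _
              (by rw [SimpleGraph.Walk.support_reverse, List.mem_reverse] at hz; exact hz)
          rw [SimpleGraph.Walk.support_reverse, List.mem_reverse] at hzz
          exact hzz
        have hSt2 : ∀ z ∈ t2.support, z ∈ S := by
          intro z hz
          apply hS2
          rw [hw2, SimpleGraph.Walk.support_cons]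
          exact List.mem_cons_of_mem _ hz
        by_cases hxy : x = y
        · -- just drop v0
          subst hxy
          have hlen' : (t1.reverse.append t2).length ≤ L := by
            simp only [SimpleGraph.Walk.length_append, SimpleGraph.Walk.length_reverse]
            omega
          refine ih (t1.reverse.append t2) hlen' ?_ hma hmb
          intro z hz
          rw [SimpleGraph.Walk.mem_support_append_iff] at hz
          exact hz.elim (hSt1 z) (hSt2 z)
        · -- shortcut the chord x–y
          have hadj : G.Adj x y := by
            rcases lt_or_gt_of_ne hxy with hlt | hlt
            · exact hch v0 x y hxv0 hlt h1 h2
            · exact (hch v0 y x hyv0 hlt h2 h1).symm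
          have hlen' : (t1.reverse.append (SimpleGraph.Walk.cons hadj t2)).length ≤ L := by
            simp only [SimpleGraph.Walk.length_append, SimpleGraph.Walk.length_reverse,
              SimpleGraph.Walk.length_cons]
            omega
          refine ih (t1.reverse.append (SimpleGraph.Walk.cons hadj t2)) hlen' ?_ hma hmb
          intro z hz
          rw [SimpleGraph.Walk.mem_support_append_iff] at hz
          rcases hz with hz | hz
          · exact hSt1 z hz
          · rw [SimpleGraph.Walk.support_cons, List.mem_cons] at hz
            rcases hz with hz | hz
            · exact hz ▸ hS1 x hxsupp
            · exact hSt2 z hz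

end Aux

/-- The graphical building set `B(G)` is chordal if and only if `G` is a
perfectly labelled chordal graph: for all `i < j < k`, if `{i,j}` and `{i,k}`
are edges of `G` then so is `{j,k}`. -/
theorem graphical_chordal_iff (n : ℕ) (G : SimpleGraph (Fin n)) :
    IsChordalSet (graphicalBuilding G) ↔
      ∀ i j k : Fin n, i < j → j < k → G.Adj i j → G.Adj i k → G.Adj j k := by
  constructor
  · intro hch i j k hij hjk hadjij hadjik
    -- the triangle {i, j, k} is in the building set
    have hijk : ({i, j, k} : Finset (Fin n)) ∈ graphicalBuilding G := by
      refine ⟨⟨i, by simp⟩, ?_⟩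
      have hi : i ∈ (↑({i, j, k} : Finset (Fin n)) : Set (Fin n)) := by simp
      have hreach : ∀ u : (↑({i, j, k} : Finset (Fin n)) : Set (Fin n)),
          (G.induce _).Reachable ⟨i, hi⟩ u := by
        rintro ⟨u, hu⟩
        simp only [Finset.coe_insert, Set.mem_insert_iff, Finset.coe_singleton,
          Set.mem_singleton_iff] at hu
        rcases hu with rfl | rfl | rfl
        · rfl
        · exact SimpleGraph.Adj.reachable (by exact hadjij)
        · exact SimpleGraph.Adj.reachable (by exact hadjik)
      haveI : Nonempty (↑(↑({i, j, k} : Finset (Fin n)) : Set (Fin n))) := ⟨⟨i, hi⟩⟩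
      exact ⟨fun u v => (hreach u).symm.trans (hreach v)⟩
    have hj : j ∈ ({i, j, k} : Finset (Fin n)) := by simp
    have hmem := hch _ hijk j hj
    have hfil : ({i, j, k} : Finset (Fin n)).filter (fun x => j ≤ x) = {j, k} := by
      ext x
      simp only [Finset.mem_filter, Finset.mem_insert, Finset.mem_singleton]
      constructor
      · rintro ⟨rfl | rfl | rfl, hle⟩
        · exact absurd hle (not_le.mpr hij)
        · exact Or.inl rfl
        · exact Or.inr rfl
      · rintro (rfl | rfl)
        · exact ⟨Or.inr (Or.inl rfl), le_refl _⟩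
        · exact ⟨Or.inr (Or.inr rfl), le_of_lt hjk⟩
    rw [hfil] at hmem
    obtain ⟨-, hconn⟩ := hmem
    have hjmem : j ∈ (↑({j, k} : Finset (Fin n)) : Set (Fin n)) := by simp
    have hkmem : k ∈ (↑({j, k} : Finset (Fin n)) : Set (Fin n)) := by simp
    obtain ⟨w, hw⟩ := reachable_to_walk (hconn.preconnected ⟨j, hjmem⟩ ⟨k, hkmem⟩)
    cases hww : w with
    | nil => exact absurd rfl (ne_of_lt hjk)
    | @cons _ c _ h p =>
      have hc : c ∈ (↑({j, k} : Finset (Fin n)) : Set (Fin n)) := by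
        apply hw
        rw [hww, SimpleGraph.Walk.support_cons]
        exact List.mem_cons_of_mem _ p.start_mem_support
      simp only [Finset.coe_insert, Set.mem_insert_iff, Finset.coe_singleton,
        Set.mem_singleton_iff] at hc
      rcases hc with rfl | rfl
      · exact absurd rfl h.ne
      · exact h
  · intro hch I hI m hm
    obtain ⟨hne, hconn⟩ := hI
    have hmJ : m ∈ I.filter (fun i => m ≤ i) := Finset.mem_filter.mpr ⟨hm, le_refl m⟩
    refine ⟨⟨m, hmJ⟩, ?_⟩
    haveI : Nonempty (↑(↑(I.filter (fun i => m ≤ i)) : Set (Fin n))) := ⟨⟨m, by simpa using hmJ⟩⟩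
    refine ⟨?_⟩
    rintro ⟨a, haJ⟩ ⟨b, hbJ⟩
    have haJ' : a ∈ I.filter (fun i => m ≤ i) := by simpa using haJ
    have hbJ' : b ∈ I.filter (fun i => m ≤ i) := by simpa using hbJ
    obtain ⟨haI, hma⟩ := Finset.mem_filter.mp haJ'
    obtain ⟨hbI, hmb⟩ := Finset.mem_filter.mp hbJ'
    have haI' : a ∈ (↑I : Set (Fin n)) := haI
    have hbI' : b ∈ (↑I : Set (Fin n)) := hbI
    obtain ⟨w, hwS⟩ := reachable_to_walk (hconn.preconnected ⟨a, haI'⟩ ⟨b, hbI'⟩)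
    obtain ⟨w', hw'⟩ := shortcut hch w.length w (le_refl _) hwS hma hmb
    refine walk_to_reachable w' ?_ haJ hbJ
    intro x hx
    obtain ⟨hxS, hxm⟩ := hw' x hx
    simp only [Finset.coe_filter, Set.mem_setOf_eq]
    exact ⟨hxS, hxm⟩
end

section
/- Let B be a chordal building set on [n], let ℓ ≥ 2, and let J_1,…,J_ℓ ∈ B be pairwise disjoint sets whose union J_1 ∪ ⋯ ∪ J_ℓ belongs to B. Then there exists an index i ∈ {1,…,ℓ} such that (J_1 ∪ ⋯ ∪ J_ℓ) ∖ J_i belongs to B. (Consequently, for a chordal building set B the nestohedron P_B is a flag simple polytope.) -/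
/-!
Induct on `|J_1 ∪ ⋯ ∪ J_ℓ|`. Remove the minimum `m` of the union from the block `J_{i₀}`
containing it; chordality keeps all the truncated blocks and their union in `B`, since removing
the minimum of a set is the same as keeping the elements above its second smallest one. If
`J_{i₀} = {m}` the union minus `m` is already the answer. Otherwise the induction hypothesis gives
an index `i` for the truncated family: for `i = i₀` it is also good for the original family, and
for `i ≠ i₀` we glue `J_{i₀}` back on, which meets the truncated set in `J_{i₀} \ {m} ≠ ∅`.
-/

open Finset Function

namespace Finset

variable {α : Type*} [DecidableEq α]

lemma erase_sdiff_erase_of_mem {s t : Finset α} {a : α} (ha : a ∈ t) :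
    s.erase a \ t.erase a = s \ t := by
  grind

lemma erase_sdiff_union_of_mem {s t u : Finset α} {a : α} (ha : a ∈ u) (hu : u ⊆ s \ t) :
    (s.erase a \ t) ∪ u = s \ t := by
  rw [erase_sdiff_comm, erase_union_of_mem ha, union_eq_left.mpr hu]

end Finset

section Chordal

variable {α ι : Type*} [LinearOrder α] {B : Set (Finset α)}

lemma erase_mem_of_chordal (hch : ∀ I ∈ B, ∀ m ∈ I, I.filter (m ≤ ·) ∈ B)
    {I : Finset α} (hI : I ∈ B) {a : α} (ha : ∀ x ∈ I, a ≤ x) (hne : (I.erase a).Nonempty) :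
    I.erase a ∈ B := by
  set c := (I.erase a).min' hne
  have hc : c ∈ I.erase a := min'_mem _ hne
  have hac : a < c := (ha c (mem_of_mem_erase hc)).lt_of_ne (ne_of_mem_erase hc).symm
  have heq : I.erase a = I.filter (c ≤ ·) := by
    ext x
    simp only [mem_erase, mem_filter]
    exact ⟨fun hx => ⟨hx.2, min'_le _ x (mem_erase.mpr hx)⟩,
      fun ⟨hx, hcx⟩ => ⟨(hac.trans_le hcx).ne', hx⟩⟩
  rw [heq]
  exact hch I hI c (mem_of_mem_erase hc)

lemma sdiff_mem_of_erase_sdiff_mem (hunion : ∀ I ∈ B, ∀ J ∈ B, (I ∩ J).Nonempty → I ∪ J ∈ B)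
    {U K L : Finset α} {a : α} (hKB : K ∈ B) (ha : a ∈ K) (hK : K ⊆ U \ L)
    (hKa : (K.erase a).Nonempty) (h : U.erase a \ L ∈ B) : U \ L ∈ B := by
  obtain ⟨y, hy⟩ := hKa
  have hmeet : (U.erase a \ L ∩ K).Nonempty := by
    refine ⟨y, mem_inter.mpr ⟨?_, mem_of_mem_erase hy⟩⟩
    rw [erase_sdiff_comm]
    exact mem_erase.mpr ⟨ne_of_mem_erase hy, hK (mem_of_mem_erase hy)⟩
  exact erase_sdiff_union_of_mem ha hK ▸ hunion _ h _ hKB hmeet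

theorem exists_biUnion_sdiff_mem_of_chordal [Fintype ι] [Nontrivial ι]
    (hne : ∀ I ∈ B, I.Nonempty)
    (hunion : ∀ I ∈ B, ∀ J ∈ B, (I ∩ J).Nonempty → I ∪ J ∈ B)
    (hch : ∀ I ∈ B, ∀ m ∈ I, I.filter (m ≤ ·) ∈ B)
    (J : ι → Finset α) (hJ : ∀ s, J s ∈ B) (hdisj : Pairwise (Disjoint on J))
    (hU : univ.biUnion J ∈ B) : ∃ i, univ.biUnion J \ J i ∈ B := by
  induction hcard : #(univ.biUnion J) using Nat.strong_induction_on generalizing J with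
  | _ N ih =>
  set U := univ.biUnion J
  have hJU : ∀ s, J s ⊆ U := fun s => subset_biUnion_of_mem J (mem_univ s)
  set m := U.min' (hne U hU)
  have hmU : ∀ x ∈ U, m ≤ x := fun x hx => min'_le U x hx
  obtain ⟨i₀, -, hm⟩ := mem_biUnion.mp (min'_mem U (hne U hU))
  have hm_notMem : ∀ s ≠ i₀, m ∉ J s := fun s hs hms => disjoint_left.mp (hdisj hs) hms hm
  have hU_erase : U.erase m ∈ B := by
    obtain ⟨t, ht⟩ := exists_ne i₀
    obtain ⟨x, hx⟩ := hne _ (hJ t)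
    refine erase_mem_of_chordal hch hU hmU ⟨x, mem_erase.mpr ⟨?_, hJU t hx⟩⟩
    rintro rfl
    exact hm_notMem t ht hx
  by_cases hsingle : ((J i₀).erase m).Nonempty
  · have hJ' : ∀ s, (J s).erase m ∈ B := by
      intro s
      rcases eq_or_ne s i₀ with rfl | hs
      · exact erase_mem_of_chordal hch (hJ s) (fun x hx => hmU x (hJU s hx)) hsingle
      · rw [erase_eq_of_notMem (hm_notMem s hs)]
        exact hJ s
    have hdisj' : Pairwise (Disjoint on fun s => (J s).erase m) := fun s t hst =>
      (hdisj hst).mono (erase_subset _ _) (erase_subset _ _)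
    have hU' : univ.biUnion (fun s => (J s).erase m) = U.erase m := (erase_biUnion _ _ _).symm
    have hlt : #(U.erase m) < N := hcard ▸ card_erase_lt_of_mem (hJU i₀ hm)
    obtain ⟨i, hi⟩ := ih _ (hU' ▸ hlt) _ hJ' hdisj' (hU' ▸ hU_erase) rfl
    rw [hU'] at hi
    rcases eq_or_ne i i₀ with rfl | hi₀
    · exact ⟨i, erase_sdiff_erase_of_mem hm ▸ hi⟩
    · rw [erase_eq_of_notMem (hm_notMem i hi₀)] at hi
      have hJ₀ : J i₀ ⊆ U \ J i := fun x hx =>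
        mem_sdiff.mpr ⟨hJU i₀ hx, disjoint_left.mp (hdisj hi₀.symm) hx⟩
      exact ⟨i, sdiff_mem_of_erase_sdiff_mem hunion (hJ i₀) hm hJ₀ hsingle hi⟩
  · have hsingleton : J i₀ = {m} := by
      simpa [not_nonempty_iff_eq_empty, erase_eq_empty_iff, ne_empty_of_mem hm] using hsingle
    exact ⟨i₀, by rwa [hsingleton, sdiff_singleton_eq_erase]⟩

end Chordal

/-- Let `B` be a chordal building set on `[n]` and `J_1, …, J_ℓ ∈ B` (`ℓ ≥ 2`)
pairwise disjoint with union in `B`.  Then for some index `i`, the set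
`(J_1 ∪ ⋯ ∪ J_ℓ) \ J_i` belongs to `B`. -/
theorem chordal_flag_condition (n ℓ : ℕ) (hℓ : 2 ≤ ℓ)
    (B : Finset (Finset (Fin n))) (hB : IsBuildingSet B) (hch : IsChordal B)
    (J : Fin ℓ → Finset (Fin n)) (hJ : ∀ s, J s ∈ B)
    (hdisj : ∀ s t : Fin ℓ, s ≠ t → Disjoint (J s) (J t))
    (hunion : Finset.univ.biUnion J ∈ B) :
    ∃ i : Fin ℓ, Finset.univ.biUnion J \ J i ∈ B := by
  have : Nontrivial (Fin ℓ) := Fin.nontrivial_iff_two_le.mpr hℓ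
  exact exists_biUnion_sdiff_mem_of_chordal (B := (B : Set (Finset (Fin n))))
    hB.1 hB.2.1 hch J hJ (fun s t hst => hdisj s t hst) hunion
end

section
/- Let B be a building set on [n]. The following are equivalent: (a) every subset N ⊆ B ∖ B_max satisfying (N1) and (N2') is a nested set (i.e., also satisfies (N2)), where (N2') requires that for every pair of disjoint I, J ∈ N the union I ∪ J does not belong to B; (b) whenever J_1,…,J_ℓ ∈ B with ℓ ≥ 2 are pairwise disjoint and J_1 ∪ ⋯ ∪ J_ℓ ∈ B, the index set {1,…,ℓ} can be split into two nonempty disjoint blocks A and A' with A ∪ A' = {1,…,ℓ} such that ⋃_{s ∈ A} J_s ∈ B and ⋃_{s ∈ A'} J_s ∈ B. (These conditions characterize when the nested set complex Δ_B, and hence the nestohedron P_B, is flag.) -/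
/-- `I` is an inclusion-maximal member of `B`. -/
def IsMaxMember {n : ℕ} (B : Finset (Finset (Fin n))) (I : Finset (Fin n)) : Prop :=
  I ∈ B ∧ ∀ J ∈ B, I ⊆ J → J = I

/-- Condition (N1): any two members of `N` are nested or disjoint. -/
def SatN1 {n : ℕ} (N : Finset (Finset (Fin n))) : Prop :=
  ∀ I ∈ N, ∀ J ∈ N, I ⊆ J ∨ J ⊆ I ∨ I ∩ J = ∅

/-- Condition (N2): no union of `k ≥ 2` pairwise disjoint members of `N`
belongs to `B`. -/
def SatN2 {n : ℕ} (B N : Finset (Finset (Fin n))) : Prop :=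
  ∀ M : Finset (Finset (Fin n)), M ⊆ N → 2 ≤ M.card →
    (∀ I ∈ M, ∀ J ∈ M, I ≠ J → I ∩ J = ∅) → M.biUnion id ∉ B

/-- Condition (N2'): no union of two disjoint members of `N` belongs to `B`. -/
def SatN2' {n : ℕ} (B N : Finset (Finset (Fin n))) : Prop :=
  ∀ I ∈ N, ∀ J ∈ N, I ≠ J → I ∩ J = ∅ → I ∪ J ∉ B

/-- Pairwise disjointness for a finset of finsets. -/
def PD {n : ℕ} (S : Finset (Finset (Fin n))) : Prop :=
  ∀ I ∈ S, ∀ K ∈ S, I ≠ K → I ∩ K = ∅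

/-- The set-version splitting condition. -/
def Split {n : ℕ} (B S : Finset (Finset (Fin n))) : Prop :=
  ∃ T ⊆ S, T.Nonempty ∧ (S \ T).Nonempty ∧ T.biUnion id ∈ B ∧ (S \ T).biUnion id ∈ B

/-- Direction (a) → set-version (b). -/
theorem partA {n : ℕ} (B : Finset (Finset (Fin n))) (hB : IsBuildingSet B)
    (ha : ∀ N : Finset (Finset (Fin n)),
        (∀ I ∈ N, I ∈ B ∧ ¬ IsMaxMember B I) →
        SatN1 N → SatN2' B N → SatN2 B N) :
    ∀ m : ℕ, ∀ S : Finset (Finset (Fin n)), S.card ≤ m → 2 ≤ S.card →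
      (∀ I ∈ S, I ∈ B) → PD S → S.biUnion id ∈ B → Split B S := by
  intro m
  induction m with
  | zero => intro S h h2 _ _ _; omega
  | succ m ih =>
    intro S hcard h2 hSB hPD hU
    rcases eq_or_lt_of_le h2 with h2' | h3
    · -- |S| = 2 : trivial split
      rcases Finset.card_eq_two.mp h2'.symm with ⟨I, K, hIK, rfl⟩
      refine ⟨{I}, ?_, ⟨I, Finset.mem_singleton_self I⟩, ?_, ?_, ?_⟩
      · intro x hx; simp at hx; simp [hx]
      · refine ⟨K, ?_⟩; simp [hIK.symm]
      · simpa using hSB I (by simp)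
      · have : ({I, K} : Finset (Finset (Fin n))) \ {I} = {K} := by
          ext L; simp only [Finset.mem_sdiff, Finset.mem_insert, Finset.mem_singleton]
          constructor
          · rintro ⟨h1 | h1, h2⟩ <;> tauto
          · rintro rfl; exact ⟨Or.inr rfl, fun h => hIK h.symm⟩
        rw [this]; simpa using hSB K (by simp)
    · -- |S| ≥ 3
      by_cases hpair : ∃ I ∈ S, ∃ K ∈ S, I ≠ K ∧ I ∪ K ∈ B
      · rcases hpair with ⟨I, hI, K, hK, hIK, hIKB⟩
        -- merge I and K
        set S' : Finset (Finset (Fin n)) := insert (I ∪ K) (S \ {I, K}) with hS'def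
        have hIKne : (I ∪ K).Nonempty := hB.1 _ hIKB
        have hIne : I.Nonempty := hB.1 _ (hSB I hI)
        have hKne : K.Nonempty := hB.1 _ (hSB K hK)
        have hIKnotS : I ∪ K ∉ S := by
          intro hmem
          have hneI : I ∪ K ≠ I := by
            intro h
            have : K ⊆ I := by rw [← h]; exact Finset.subset_union_right
            rcases hKne with ⟨x, hx⟩
            have : x ∈ I ∩ K := Finset.mem_inter.mpr ⟨this hx, hx⟩
            rw [hPD I hI K hK hIK] at this; simp at this
          have hneK : I ∪ K ≠ K := by
            intro h
            have : I ⊆ K := by rw [← h]; exact Finset.subset_union_left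
            rcases hIne with ⟨x, hx⟩
            have : x ∈ I ∩ K := Finset.mem_inter.mpr ⟨hx, this hx⟩
            rw [hPD I hI K hK hIK] at this; simp at this
          -- I ∪ K ∈ S, disjoint from I, but I ⊆ I ∪ K
          have := hPD (I ∪ K) hmem I hI hneI
          rcases hIne with ⟨x, hx⟩
          have : x ∈ (I ∪ K) ∩ I := Finset.mem_inter.mpr ⟨Finset.mem_union_left _ hx, hx⟩
          rw [hPD (I ∪ K) hmem I hI hneI] at this; simp at this
        have hIKnotSd : I ∪ K ∉ S \ {I, K} := fun h => hIKnotS (Finset.mem_sdiff.mp h).1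
        have hpairS : ({I, K} : Finset (Finset (Fin n))) ⊆ S := by
          intro x hx; rcases Finset.mem_insert.mp hx with rfl | hx
          · exact hI
          · rw [Finset.mem_singleton] at hx; subst hx; exact hK
        have hcard' : S'.card = S.card - 1 := by
          rw [hS'def, Finset.card_insert_of_notMem hIKnotSd,
            Finset.card_sdiff_of_subset hpairS, Finset.card_insert_of_notMem (by simpa using hIK),
            Finset.card_singleton]
          omega
        have hS'B : ∀ L ∈ S', L ∈ B := by
          intro L hL
          rcases Finset.mem_insert.mp hL with rfl | hL
          · exact hIKB
          · exact hSB L (Finset.mem_sdiff.mp hL).1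
        have hdisjIK : ∀ L ∈ S \ {I, K}, (I ∪ K) ∩ L = ∅ := by
          intro L hL
          rcases Finset.mem_sdiff.mp hL with ⟨hLS, hLnot⟩
          simp only [Finset.mem_insert, Finset.mem_singleton, not_or] at hLnot
          rw [Finset.union_inter_distrib_right, hPD I hI L hLS (fun h => hLnot.1 h.symm),
            hPD K hK L hLS (fun h => hLnot.2 h.symm)]
          simp
        have hPD' : PD S' := by
          intro L1 h1 L2 h2 hne
          rcases Finset.mem_insert.mp h1 with rfl | h1
          · rcases Finset.mem_insert.mp h2 with rfl | h2
            · exact absurd rfl hne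
            · exact hdisjIK L2 h2
          · rcases Finset.mem_insert.mp h2 with rfl | h2
            · rw [Finset.inter_comm]; exact hdisjIK L1 h1
            · exact hPD L1 (Finset.mem_sdiff.mp h1).1 L2 (Finset.mem_sdiff.mp h2).1 hne
        have hUnionEq : S'.biUnion id = S.biUnion id := by
          ext x
          simp only [Finset.mem_biUnion, id]
          constructor
          · rintro ⟨L, hL, hx⟩
            rcases Finset.mem_insert.mp hL with rfl | hL
            · rcases Finset.mem_union.mp hx with hx | hx
              · exact ⟨I, hI, hx⟩
              · exact ⟨K, hK, hx⟩
            · exact ⟨L, (Finset.mem_sdiff.mp hL).1, hx⟩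
          · rintro ⟨L, hL, hx⟩
            by_cases hLIK : L = I ∨ L = K
            · refine ⟨I ∪ K, Finset.mem_insert_self _ _, ?_⟩
              rcases hLIK with rfl | rfl
              · exact Finset.mem_union_left _ hx
              · exact Finset.mem_union_right _ hx
            · exact ⟨L, Finset.mem_insert_of_mem
                (Finset.mem_sdiff.mpr ⟨hL, by
                  simp only [Finset.mem_insert, Finset.mem_singleton]; exact hLIK⟩), hx⟩
        have hU' : S'.biUnion id ∈ B := by rw [hUnionEq]; exact hU
        have h2' : 2 ≤ S'.card := by omega
        obtain ⟨T', hT'sub, hT'ne, hT'cne, hT'B, hT'cB⟩ :=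
          ih S' (by omega) h2' hS'B hPD' hU'
        by_cases hIKT : I ∪ K ∈ T'
        · -- unmerge inside T'
          refine ⟨(T' \ {I ∪ K}) ∪ {I, K}, ?_, ⟨I, by simp⟩, ?_, ?_, ?_⟩
          · intro L hL
            rcases Finset.mem_union.mp hL with hL | hL
            · have := hT'sub (Finset.mem_sdiff.mp hL).1
              have hLne := (Finset.mem_sdiff.mp hL).2
              rcases Finset.mem_insert.mp this with rfl | h
              · simp at hLne
              · exact (Finset.mem_sdiff.mp h).1
            · exact hpairS hL
          · -- S \ T = S' \ T'
            have hset : S \ ((T' \ {I ∪ K}) ∪ {I, K}) = S' \ T' := by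
              ext L
              constructor
              · intro h
                rcases Finset.mem_sdiff.mp h with ⟨hLS, hnot⟩
                have hnI : L ≠ I := by
                  intro h'; exact hnot (Finset.mem_union_right _ (by simp [h']))
                have hnK : L ≠ K := by
                  intro h'; exact hnot (Finset.mem_union_right _ (by simp [h']))
                have hnT' : L ∉ T' := by
                  intro hLT'
                  exact hnot (Finset.mem_union_left _ (Finset.mem_sdiff.mpr
                    ⟨hLT', fun heq => hIKnotS ((Finset.mem_singleton.mp heq) ▸ hLS)⟩))
                refine Finset.mem_sdiff.mpr ⟨?_, hnT'⟩
                exact Finset.mem_insert_of_mem (Finset.mem_sdiff.mpr ⟨hLS, by simp [hnI, hnK]⟩)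
              · intro h
                rcases Finset.mem_sdiff.mp h with ⟨hLS', hnT'⟩
                have hne : L ≠ I ∪ K := fun h' => hnT' (h' ▸ hIKT)
                have hLmem : L ∈ S \ {I, K} := by
                  rcases Finset.mem_insert.mp hLS' with h' | h'
                  · exact absurd h' hne
                  · exact h'
                rcases Finset.mem_sdiff.mp hLmem with ⟨hLS, hLnot⟩
                simp only [Finset.mem_insert, Finset.mem_singleton, not_or] at hLnot
                refine Finset.mem_sdiff.mpr ⟨hLS, ?_⟩
                intro hmem
                rcases Finset.mem_union.mp hmem with h' | h'
                · exact hnT' (Finset.mem_sdiff.mp h').1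
                · rcases Finset.mem_insert.mp h' with h'' | h''
                  · exact hLnot.1 h''
                  · exact hLnot.2 (Finset.mem_singleton.mp h'')
            rcases hT'cne with ⟨L, hL⟩
            exact ⟨L, by rw [hset]; exact hL⟩
          · -- union of T equals union of T'
            have : ((T' \ {I ∪ K}) ∪ {I, K}).biUnion id = T'.biUnion id := by
              ext x
              simp only [Finset.mem_biUnion, Finset.mem_union, Finset.mem_sdiff,
                Finset.mem_insert, Finset.mem_singleton, id]
              constructor
              · rintro ⟨L, hL | hL, hx⟩
                · exact ⟨L, hL.1, hx⟩
                · refine ⟨I ∪ K, hIKT, ?_⟩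
                  rcases hL with rfl | rfl
                  · exact Finset.mem_union_left _ hx
                  · exact Finset.mem_union_right _ hx
              · rintro ⟨L, hL, hx⟩
                by_cases hLe : L = I ∪ K
                · subst hLe
                  rcases Finset.mem_union.mp hx with hx | hx
                  · exact ⟨I, Or.inr (Or.inl rfl), hx⟩
                  · exact ⟨K, Or.inr (Or.inr rfl), hx⟩
                · exact ⟨L, Or.inl ⟨hL, hLe⟩, hx⟩
            rw [this]; exact hT'B
          · have hset : S \ ((T' \ {I ∪ K}) ∪ {I, K}) = S' \ T' := by
              ext L
              constructor
              · intro h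
                rcases Finset.mem_sdiff.mp h with ⟨hLS, hnot⟩
                have hnI : L ≠ I := by
                  intro h'; exact hnot (Finset.mem_union_right _ (by simp [h']))
                have hnK : L ≠ K := by
                  intro h'; exact hnot (Finset.mem_union_right _ (by simp [h']))
                have hnT' : L ∉ T' := by
                  intro hLT'
                  exact hnot (Finset.mem_union_left _ (Finset.mem_sdiff.mpr
                    ⟨hLT', fun heq => hIKnotS ((Finset.mem_singleton.mp heq) ▸ hLS)⟩))
                refine Finset.mem_sdiff.mpr ⟨?_, hnT'⟩
                exact Finset.mem_insert_of_mem (Finset.mem_sdiff.mpr ⟨hLS, by simp [hnI, hnK]⟩)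
              · intro h
                rcases Finset.mem_sdiff.mp h with ⟨hLS', hnT'⟩
                have hne : L ≠ I ∪ K := fun h' => hnT' (h' ▸ hIKT)
                have hLmem : L ∈ S \ {I, K} := by
                  rcases Finset.mem_insert.mp hLS' with h' | h'
                  · exact absurd h' hne
                  · exact h'
                rcases Finset.mem_sdiff.mp hLmem with ⟨hLS, hLnot⟩
                simp only [Finset.mem_insert, Finset.mem_singleton, not_or] at hLnot
                refine Finset.mem_sdiff.mpr ⟨hLS, ?_⟩
                intro hmem
                rcases Finset.mem_union.mp hmem with h' | h'
                · exact hnT' (Finset.mem_sdiff.mp h').1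
                · rcases Finset.mem_insert.mp h' with h'' | h''
                  · exact hLnot.1 h''
                  · exact hLnot.2 (Finset.mem_singleton.mp h'')
            rw [hset]; exact hT'cB
        · -- I ∪ K ∉ T' : take T = T'
          have hT'S : T' ⊆ S := by
            intro L hL
            rcases Finset.mem_insert.mp (hT'sub hL) with rfl | h
            · exact absurd hL hIKT
            · exact (Finset.mem_sdiff.mp h).1
          have hInotT' : I ∉ T' := by
            intro h
            have := hT'sub h
            rcases Finset.mem_insert.mp this with heq | h'
            · rcases hKne with ⟨x, hx⟩
              have : x ∈ I := by rw [heq]; exact Finset.mem_union_right _ hx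
              have : x ∈ I ∩ K := Finset.mem_inter.mpr ⟨this, hx⟩
              rw [hPD I hI K hK hIK] at this; simp at this
            · exact (Finset.mem_sdiff.mp h').2 (Finset.mem_insert_self _ _)
          refine ⟨T', hT'S, hT'ne, ⟨I, Finset.mem_sdiff.mpr ⟨hI, hInotT'⟩⟩, hT'B, ?_⟩
          have : (S \ T').biUnion id = (S' \ T').biUnion id := by
            ext x
            simp only [Finset.mem_biUnion, id]
            constructor
            · rintro ⟨L, hL, hx⟩
              rcases Finset.mem_sdiff.mp hL with ⟨hLS, hLT⟩
              by_cases hLIK : L = I ∨ L = K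
              · refine ⟨I ∪ K, Finset.mem_sdiff.mpr ⟨Finset.mem_insert_self _ _, hIKT⟩, ?_⟩
                rcases hLIK with rfl | rfl
                · exact Finset.mem_union_left _ hx
                · exact Finset.mem_union_right _ hx
              · refine ⟨L, Finset.mem_sdiff.mpr ⟨Finset.mem_insert_of_mem
                  (Finset.mem_sdiff.mpr ⟨hLS, by
                    simp only [Finset.mem_insert, Finset.mem_singleton]
                    exact hLIK⟩), hLT⟩, hx⟩
            · rintro ⟨L, hL, hx⟩
              rcases Finset.mem_sdiff.mp hL with ⟨hLS', hLT⟩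
              rcases Finset.mem_insert.mp hLS' with rfl | h1
              · rcases Finset.mem_union.mp hx with hx | hx
                · exact ⟨I, Finset.mem_sdiff.mpr ⟨hI, hInotT'⟩, hx⟩
                · refine ⟨K, Finset.mem_sdiff.mpr ⟨hK, ?_⟩, hx⟩
                  intro h
                  have := hT'sub h
                  rcases Finset.mem_insert.mp this with heq | h'
                  · rcases hIne with ⟨y, hy⟩
                    have : y ∈ K := by rw [heq]; exact Finset.mem_union_left _ hy
                    have : y ∈ I ∩ K := Finset.mem_inter.mpr ⟨hy, this⟩
                    rw [hPD I hI K hK hIK] at this; simp at this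
                  · have := (Finset.mem_sdiff.mp h').2
                    simp at this
              · exact ⟨L, Finset.mem_sdiff.mpr ⟨(Finset.mem_sdiff.mp h1).1, hLT⟩, hx⟩
          rw [this]; exact hT'cB
      · -- no pair unites in B : contradiction with (a)
        exfalso
        push_neg at hpair
        have hNprop : ∀ I ∈ S, I ∈ B ∧ ¬ IsMaxMember B I := by
          intro I hI
          refine ⟨hSB I hI, ?_⟩
          rintro ⟨hIB, hmax⟩
          -- S.biUnion id strictly contains I
          have hIsub : I ⊆ S.biUnion id := by
            intro x hx; exact Finset.mem_biUnion.mpr ⟨I, hI, hx⟩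
          have hEq := hmax _ hU hIsub
          -- pick another element K of S
          obtain ⟨K, hK, hKI⟩ : ∃ K ∈ S, K ≠ I := by
            by_contra h
            push_neg at h
            have : S ⊆ {I} := fun L hL => Finset.mem_singleton.mpr (h L hL)
            have := Finset.card_le_card this
            simp at this; omega
          rcases hB.1 K (hSB K hK) with ⟨x, hx⟩
          have hxU : x ∈ S.biUnion id := Finset.mem_biUnion.mpr ⟨K, hK, hx⟩
          rw [hEq] at hxU
          have : x ∈ K ∩ I := Finset.mem_inter.mpr ⟨hx, hxU⟩
          rw [hPD K hK I hI hKI] at this; simp at this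
        have hN1 : SatN1 S := by
          intro I hI K hK
          by_cases h : I = K
          · subst h; exact Or.inl (le_refl I)
          · exact Or.inr (Or.inr (hPD I hI K hK h))
        have hN2' : SatN2' B S := by
          intro I hI K hK hne _
          exact hpair I hI K hK hne
        exact ha S hNprop hN1 hN2' S (le_refl S) h2 hPD hU

/-- Direction set-version (b) → (a). -/
theorem partB {n : ℕ} (B : Finset (Finset (Fin n))) (hB : IsBuildingSet B)
    (hb : ∀ S : Finset (Finset (Fin n)), 2 ≤ S.card →
      (∀ I ∈ S, I ∈ B) → PD S → S.biUnion id ∈ B → Split B S)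
    (N : Finset (Finset (Fin n)))
    (hN : ∀ I ∈ N, I ∈ B ∧ ¬ IsMaxMember B I)
    (hN1 : SatN1 N) (hN2' : SatN2' B N) : SatN2 B N := by
  suffices h : ∀ m : ℕ, ∀ M : Finset (Finset (Fin n)), M.card ≤ m → M ⊆ N →
      2 ≤ M.card → (∀ I ∈ M, ∀ J ∈ M, I ≠ J → I ∩ J = ∅) → M.biUnion id ∉ B by
    intro M hMN h2 hPD
    exact h M.card M (le_refl _) hMN h2 hPD
  intro m
  induction m with
  | zero => intro M h h' h2 _ _; omega
  | succ m ih =>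
    intro M hcard hMN h2 hPDM hUB
    obtain ⟨T, hTM, hTne, hTcne, hTB, hTcB⟩ :=
      hb M h2 (fun I hI => (hN I (hMN hI)).1) hPDM hUB
    have hTcard : T.card < M.card := by
      have h1 : T.card ≤ M.card := Finset.card_le_card hTM
      rcases eq_or_lt_of_le h1 with heq | h; swap
      · exact h
      · exfalso
        have : T = M := Finset.eq_of_subset_of_card_le hTM (le_of_eq heq.symm)
        rcases hTcne with ⟨L, hL⟩
        rw [this] at hL
        simp at hL
    have hTccard : (M \ T).card < M.card := by
      rcases hTne with ⟨L, hL⟩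
      have : L ∈ M := hTM hL
      have hsub : M \ T ⊆ M := Finset.sdiff_subset
      have : M \ T ≠ M := by
        intro h
        have hLM : L ∈ M := hTM hL
        rw [← h] at hLM
        exact (Finset.mem_sdiff.mp hLM).2 hL
      exact Finset.card_lt_card (Finset.ssubset_iff_subset_ne.mpr ⟨hsub, this⟩)
    by_cases h2T : 2 ≤ T.card
    · exact ih T (by omega) (hTM.trans hMN) h2T
        (fun I hI J hJ => hPDM I (hTM hI) J (hTM hJ)) hTB
    · by_cases h2Tc : 2 ≤ (M \ T).card
      · exact ih (M \ T) (by omega) ((Finset.sdiff_subset).trans hMN) h2Tc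
          (fun I hI J hJ => hPDM I (Finset.sdiff_subset hI) J (Finset.sdiff_subset hJ))
          hTcB
      · -- both have card 1, so M = {I, K}
        have hT1 : T.card = 1 := by
          rcases hTne with ⟨L, hL⟩
          have := Finset.card_pos.mpr ⟨L, hL⟩
          omega
        have hTc1 : (M \ T).card = 1 := by
          rcases hTcne with ⟨L, hL⟩
          have := Finset.card_pos.mpr ⟨L, hL⟩
          omega
        rcases Finset.card_eq_one.mp hT1 with ⟨I, rfl⟩
        rcases Finset.card_eq_one.mp hTc1 with ⟨K, hKeq⟩
        have hIM : I ∈ M := hTM (Finset.mem_singleton_self I)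
        have hKM : K ∈ M := by
          have : K ∈ M \ {I} := hKeq ▸ Finset.mem_singleton_self K
          exact (Finset.mem_sdiff.mp this).1
        have hIK : I ≠ K := by
          have : K ∈ M \ {I} := hKeq ▸ Finset.mem_singleton_self K
          exact fun h => (Finset.mem_sdiff.mp this).2 (Finset.mem_singleton.mpr h.symm)
        have hMeq : M = {I, K} := by
          have : M = {I} ∪ (M \ {I}) := by
            rw [Finset.union_sdiff_of_subset hTM]
          rw [this, hKeq]
          rfl
        have : M.biUnion id = I ∪ K := by
          rw [hMeq]
          simp [Finset.biUnion_insert]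
        rw [this] at hUB
        exact hN2' I (hMN hIM) K (hMN hKM) hIK (hPDM I hIM K hKM hIK) hUB

/-- Characterization of flag nested set complexes: for a building set `B`,
every `N ⊆ B ∖ B_max` satisfying (N1) and (N2') is a nested set, if and only
if every family of `ℓ ≥ 2` pairwise disjoint members of `B` whose union is in
`B` can be split into two nonempty blocks each of whose unions is in `B`. -/
theorem flag_nestohedron_characterization (n : ℕ)
    (B : Finset (Finset (Fin n))) (hB : IsBuildingSet B) :
    (∀ N : Finset (Finset (Fin n)),
        (∀ I ∈ N, I ∈ B ∧ ¬ IsMaxMember B I) →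
        SatN1 N → SatN2' B N → SatN2 B N) ↔
    (∀ ℓ : ℕ, 2 ≤ ℓ → ∀ J : Fin ℓ → Finset (Fin n),
        (∀ s, J s ∈ B) →
        (∀ s t : Fin ℓ, s ≠ t → Disjoint (J s) (J t)) →
        Finset.univ.biUnion J ∈ B →
        ∃ A A' : Finset (Fin ℓ), A.Nonempty ∧ A'.Nonempty ∧
          Disjoint A A' ∧ A ∪ A' = Finset.univ ∧
          A.biUnion J ∈ B ∧ A'.biUnion J ∈ B) := by
  constructor
  · -- (a) → (b)
    intro ha ℓ hℓ J hJB hJdisj hJU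
    have hJne : ∀ s, (J s).Nonempty := fun s => hB.1 _ (hJB s)
    have hJinj : Function.Injective J := by
      intro s t hst
      by_contra hne
      have := hJdisj s t hne
      rw [hst] at this
      rcases hJne t with ⟨x, hx⟩
      exact (Finset.disjoint_left.mp this hx) hx
    set S : Finset (Finset (Fin n)) := Finset.univ.image J with hSdef
    have hmemS : ∀ I, I ∈ S ↔ ∃ s, J s = I := by
      intro I; simp [hSdef]
    have hScard : S.card = ℓ := by
      rw [hSdef, Finset.card_image_of_injective _ hJinj, Finset.card_univ, Fintype.card_fin]
    have hSB : ∀ I ∈ S, I ∈ B := by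
      intro I hI; rcases (hmemS I).mp hI with ⟨s, rfl⟩; exact hJB s
    have hPDS : PD S := by
      intro I hI K hK hne
      rcases (hmemS I).mp hI with ⟨s, rfl⟩
      rcases (hmemS K).mp hK with ⟨t, rfl⟩
      have hst : s ≠ t := fun h => hne (by rw [h])
      exact Finset.disjoint_iff_inter_eq_empty.mp (hJdisj s t hst)
    have hSU : S.biUnion id = Finset.univ.biUnion J := by
      rw [hSdef, Finset.image_biUnion]
      rfl
    obtain ⟨T, hTS, hTne, hTcne, hTB, hTcB⟩ :=
      partA B hB ha S.card S (le_refl _) (by omega) hSB hPDS (by rw [hSU]; exact hJU)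
    refine ⟨Finset.univ.filter (fun s => J s ∈ T),
      Finset.univ.filter (fun s => J s ∉ T), ?_, ?_, ?_, ?_, ?_, ?_⟩
    · rcases hTne with ⟨I, hI⟩
      rcases (hmemS I).mp (hTS hI) with ⟨s, rfl⟩
      exact ⟨s, by simp [hI]⟩
    · rcases hTcne with ⟨I, hI⟩
      rcases Finset.mem_sdiff.mp hI with ⟨hIS, hIT⟩
      rcases (hmemS I).mp hIS with ⟨s, rfl⟩
      exact ⟨s, by simp [hIT]⟩
    · simp [Finset.disjoint_left]
    · ext s; simp; tauto
    · have : (Finset.univ.filter (fun s => J s ∈ T)).biUnion J = T.biUnion id := by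
        ext x
        simp only [Finset.mem_biUnion, Finset.mem_filter, Finset.mem_univ, true_and, id]
        constructor
        · rintro ⟨s, hs, hx⟩; exact ⟨J s, hs, hx⟩
        · rintro ⟨I, hI, hx⟩
          rcases (hmemS I).mp (hTS hI) with ⟨s, rfl⟩
          exact ⟨s, hI, hx⟩
      rw [this]; exact hTB
    · have : (Finset.univ.filter (fun s => J s ∉ T)).biUnion J = (S \ T).biUnion id := by
        ext x
        simp only [Finset.mem_biUnion, Finset.mem_filter, Finset.mem_univ, true_and,
          Finset.mem_sdiff, id]
        constructor
        · rintro ⟨s, hs, hx⟩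
          exact ⟨J s, ⟨(hmemS _).mpr ⟨s, rfl⟩, hs⟩, hx⟩
        · rintro ⟨I, ⟨hIS, hIT⟩, hx⟩
          rcases (hmemS I).mp hIS with ⟨s, rfl⟩
          exact ⟨s, hIT, hx⟩
      rw [this]; exact hTcB
  · -- (b) → (a)
    intro hb
    apply partB B hB
    -- prove set-version (b) from indexed (b)
    intro S h2 hSB hPDS hUS
    -- enumerate S
    set ℓ := S.card with hldef
    set e := S.equivFin with hedef
    set J : Fin ℓ → Finset (Fin n) := fun i => (e.symm i : Finset (Fin n)) with hJdef
    have hJmem : ∀ i, J i ∈ S := fun i => (e.symm i).2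
    have hJinj : Function.Injective J := by
      intro s t hst
      have : e.symm s = e.symm t := Subtype.ext hst
      exact e.symm.injective this
    have hJsurj : ∀ I ∈ S, ∃ s, J s = I := by
      intro I hI
      exact ⟨e ⟨I, hI⟩, by simp [hJdef]⟩
    have hJB : ∀ s, J s ∈ B := fun s => hSB _ (hJmem s)
    have hJdisj : ∀ s t : Fin ℓ, s ≠ t → Disjoint (J s) (J t) := by
      intro s t hst
      exact Finset.disjoint_iff_inter_eq_empty.mpr
        (hPDS _ (hJmem s) _ (hJmem t) (fun h => hst (hJinj h)))
    have hUnion : Finset.univ.biUnion J = S.biUnion id := by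
      ext x
      simp only [Finset.mem_biUnion, Finset.mem_univ, true_and, id]
      constructor
      · rintro ⟨s, hx⟩; exact ⟨J s, hJmem s, hx⟩
      · rintro ⟨I, hI, hx⟩
        rcases hJsurj I hI with ⟨s, rfl⟩
        exact ⟨s, hx⟩
    obtain ⟨A, A', hAne, hA'ne, hAdisj, hAunion, hAB, hA'B⟩ :=
      hb ℓ h2 J hJB hJdisj (by rw [hUnion]; exact hUS)
    refine ⟨A.image J, ?_, ?_, ?_, ?_, ?_⟩
    · intro I hI
      rcases Finset.mem_image.mp hI with ⟨s, _, rfl⟩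
      exact hJmem s
    · rcases hAne with ⟨s, hs⟩
      exact ⟨J s, Finset.mem_image_of_mem J hs⟩
    · rcases hA'ne with ⟨t, ht⟩
      refine ⟨J t, Finset.mem_sdiff.mpr ⟨hJmem t, ?_⟩⟩
      intro h
      rcases Finset.mem_image.mp h with ⟨s, hs, hst⟩
      have : s = t := hJinj hst
      subst this
      exact Finset.disjoint_left.mp hAdisj hs ht
    · rw [Finset.image_biUnion]
      exact hAB
    · have : S \ A.image J = A'.image J := by
        ext I
        simp only [Finset.mem_sdiff, Finset.mem_image]
        constructor
        · rintro ⟨hIS, hnot⟩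
          rcases hJsurj I hIS with ⟨t, rfl⟩
          have : t ∈ A ∪ A' := hAunion ▸ Finset.mem_univ t
          rcases Finset.mem_union.mp this with ht | ht
          · exact absurd ⟨t, ht, rfl⟩ hnot
          · exact ⟨t, ht, rfl⟩
        · rintro ⟨t, ht, rfl⟩
          refine ⟨hJmem t, ?_⟩
          rintro ⟨s, hs, hst⟩
          have : s = t := hJinj hst
          subst this
          exact Finset.disjoint_left.mp hAdisj hs ht
      rw [this, Finset.image_biUnion]
      exact hA'B
end

section
/- Let Q be a preorder (reflexive transitive relation) on [n] with n ≥ 1. Then Q is antisymmetric (i.e., a partial order) if and only if the braid cone σ_Q has nonempty interior in ℝ^n (i.e., σ_Q is full-dimensional). -/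
/-- The braid cone of a preorder `r` on `[n]`:
`σ_Q = {x ∈ ℝ^n : x i ≤ x j whenever i ≼ j}`. -/
def braidCone {n : ℕ} (r : Fin n → Fin n → Prop) : Set (Fin n → ℝ) :=
  {x | ∀ i j : Fin n, r i j → x i ≤ x j}

/-- A preorder `Q` on `[n]` (`n ≥ 1`) is antisymmetric (i.e. a partial order)
if and only if its braid cone `σ_Q` is full-dimensional, i.e. has nonempty
interior in `ℝ^n`. -/
theorem partialOrder_iff_fullDimensional (n : ℕ) (hn : 1 ≤ n)
    (r : Fin n → Fin n → Prop)
    (hrefl : ∀ a, r a a) (htrans : ∀ a b c, r a b → r b c → r a c) :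
    (∀ a b, r a b → r b a → a = b) ↔ (interior (braidCone r)).Nonempty := by
  classical
  constructor
  · intro hanti
    -- the point with coordinates x i = #{k : r k i}
    set x : Fin n → ℝ := fun i => ((Finset.univ.filter (fun k => r k i)).card : ℝ) with hx
    have key : ∀ i j, r i j → i ≠ j → x i + 1 ≤ x j := by
      intro i j hij hne
      have hsub : Finset.univ.filter (fun k => r k i) ⊂ Finset.univ.filter (fun k => r k j) := by
        constructor
        · intro k hk
          simp only [Finset.mem_filter, Finset.mem_univ, true_and] at hk ⊢
          exact htrans k i j hk hij
        · intro hsub'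
          have hj : j ∈ Finset.univ.filter (fun k => r k j) := by
            simp [hrefl j]
          have := hsub' hj
          simp only [Finset.mem_filter, Finset.mem_univ, true_and] at this
          exact hne (hanti i j hij this)
      have := Finset.card_lt_card hsub
      have : (Finset.univ.filter (fun k => r k i)).card + 1 ≤
          (Finset.univ.filter (fun k => r k j)).card := this
      simp only [hx]
      exact_mod_cast this
    refine ⟨x, ?_⟩
    have hsub : Metric.ball x (1/2) ⊆ braidCone r := by
      intro y hy
      intro i j hij
      by_cases hne : i = j
      · subst hne; exact le_refl _
      · have hxij := key i j hij hne
        have hi : dist (y i) (x i) ≤ dist y x := dist_le_pi_dist y x i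
        have hj : dist (y j) (x j) ≤ dist y x := dist_le_pi_dist y x j
        have hd : dist y x < 1/2 := Metric.mem_ball.1 hy
        rw [Real.dist_eq] at hi hj
        have hi' : |y i - x i| < 1/2 := lt_of_le_of_lt hi hd
        have hj' : |y j - x j| < 1/2 := lt_of_le_of_lt hj hd
        rw [abs_lt] at hi' hj'
        linarith [hi'.1, hi'.2, hj'.1, hj'.2]
    exact mem_interior.2 ⟨Metric.ball x (1/2), hsub, Metric.isOpen_ball,
      Metric.mem_ball_self (by norm_num)⟩
  · rintro ⟨x, hx⟩ a b hab hba
    by_contra hne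
    obtain ⟨ε, hε, hball⟩ := Metric.isOpen_iff.1 isOpen_interior x hx
    have hx' : x ∈ braidCone r := interior_subset hx
    -- perturb x at coordinate a
    set y : Fin n → ℝ := Function.update x a (x a + ε/2) with hy
    have hyball : y ∈ Metric.ball x ε := by
      rw [Metric.mem_ball, dist_pi_lt_iff hε]
      intro i
      by_cases hia : i = a
      · subst hia
        have hyi : y i = x i + ε/2 := Function.update_self _ _ _
        rw [hyi, Real.dist_eq]
        have hcalc : x i + ε/2 - x i = ε/2 := by ring
        rw [hcalc, abs_of_pos (half_pos hε)]
        linarith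
      · simp [hy, Function.update_of_ne hia, hε]
    have hycone : y ∈ braidCone r := interior_subset (hball hyball)
    have h1 : y a ≤ y b := hycone a b hab
    have h2 : y b ≤ y a := hycone b a hba
    have heq : y a = y b := le_antisymm h1 h2
    have hxy : x a = x b := le_antisymm (hx' a b hab) (hx' b a hba)
    have hya : y a = x a + ε/2 := by simp [hy]
    have hyb : y b = x b := by simp [hy, Function.update_of_ne (Ne.symm hne)]
    rw [hya, hyb, ← hxy] at heq
    linarith
end

section
/- Let Q be a preorder (reflexive transitive relation) on [n] with n ≥ 1. Then Q is connected — i.e., the graph on vertex set [n] with an edge {i,j} for each pair i ≠ j with i ≼_Q j or j ≼_Q i is connected — if and only if the braid cone σ_Q is pointed modulo the diagonal, i.e., every x ∈ ℝ^n with both x ∈ σ_Q and −x ∈ σ_Q is a constant vector (x_1 = x_2 = ⋯ = x_n). -/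
/-- A preorder `Q` on `[n]` (`n ≥ 1`) is connected (the graph with an edge
`{i,j}` whenever `i ≼ j` or `j ≼ i` is connected) if and only if the braid
cone `σ_Q` is pointed modulo the diagonal: any `x` with `x ∈ σ_Q` and
`-x ∈ σ_Q` is a constant vector. -/
theorem connected_iff_pointed (n : ℕ) (hn : 1 ≤ n)
    (r : Fin n → Fin n → Prop)
    (hrefl : ∀ a, r a a) (htrans : ∀ a b c, r a b → r b c → r a c) :
    (∀ a b : Fin n, Relation.ReflTransGen (fun u v => r u v ∨ r v u) a b) ↔
      (∀ x : Fin n → ℝ, x ∈ braidCone r → (-x) ∈ braidCone r →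
        ∀ i j : Fin n, x i = x j) := by
  constructor
  · intro hconn x hx hnx i j
    have key : ∀ u v, r u v → x u = x v := fun u v h =>
      le_antisymm (hx u v h) (by have := hnx u v h; simp only [Pi.neg_apply] at this; linarith)
    have main : ∀ a b, Relation.ReflTransGen (fun u v => r u v ∨ r v u) a b → x a = x b := by
      intro a b h
      induction h with
      | refl => rfl
      | tail _ h ih =>
        cases h with
        | inl h => exact ih.trans (key _ _ h)
        | inr h => exact ih.trans (key _ _ h).symm
    exact main i j (hconn i j)
  · intro hpt a b
    classical
    set x : Fin n → ℝ := fun i =>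
      if Relation.ReflTransGen (fun u v => r u v ∨ r v u) a i then 1 else 0 with hxdef
    have hedge : ∀ i j, r i j → x i = x j := by
      intro i j h
      simp only [hxdef]
      by_cases hi : Relation.ReflTransGen (fun u v => r u v ∨ r v u) a i
      · rw [if_pos hi, if_pos (hi.tail (Or.inl h))]
      · rw [if_neg hi, if_neg (fun hj => hi (hj.tail (Or.inr h)))]
    have hx : x ∈ braidCone r := fun i j h => le_of_eq (hedge i j h)
    have hnx : (-x) ∈ braidCone r := fun i j h => by
      simp only [Pi.neg_apply, hedge i j h, le_refl]
    have heq := hpt x hx hnx a b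
    have ha : x a = 1 := by simp [hxdef, Relation.ReflTransGen.refl]
    by_contra hb
    have hb' : x b = 0 := by simp [hxdef, hb]
    rw [ha, hb'] at heq
    exact one_ne_zero heq
end

section
/- For every n ≥ 1, in the polynomial ring ℚ[t] one has ∑_{k=1}^{n} (1/n)·binom(n,k)·binom(n,k−1)·t^{k−1} = ∑_{r=0}^{⌊(n−1)/2⌋} C_r · binom(n−1, 2r) · t^r · (1+t)^{n−1−2r}, where C_r = (1/(r+1))·binom(2r,r) is the r-th Catalan number. (Equivalently, the γ-polynomial of the (n−1)-dimensional associahedron is ∑_r C_r binom(n−1,2r) t^r.) -/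
open Polynomial Finset

-- multinomial factorization
lemma aux1 (m j r : ℕ) (h2r : 2*r ≤ m) (hrj : r ≤ j) (hj : j ≤ m) :
    ((2*r).choose r : ℚ) * (m.choose (2*r) : ℚ) * (((m - 2*r).choose (j - r) : ℕ) : ℚ)
      = (m.choose j : ℚ) * (j.choose r : ℚ) * (((m - j).choose r : ℕ) : ℚ) := by
  by_cases hr : r ≤ m - j
  · have h1 : r ≤ 2*r := by omega
    have h2 : j - r ≤ m - 2*r := by omega
    have e1 : 2*r - r = r := by omega
    have e2 : (m - 2*r) - (j - r) = m - j - r := by omega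
    have e3 : (m - j) - r = m - j - r := by omega
    rw [Nat.cast_choose ℚ h1, Nat.cast_choose ℚ h2r, Nat.cast_choose ℚ h2,
      Nat.cast_choose ℚ hj, Nat.cast_choose ℚ hrj, Nat.cast_choose ℚ hr, e1, e2, e3]
    have f1 := Nat.factorial_ne_zero r
    have f2 := Nat.factorial_ne_zero (j - r)
    have f3 := Nat.factorial_ne_zero (m - j - r)
    have f4 := Nat.factorial_ne_zero (2*r)
    have f5 := Nat.factorial_ne_zero (m - 2*r)
    have f6 := Nat.factorial_ne_zero j
    have f7 := Nat.factorial_ne_zero (m - j)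
    field_simp
  · have z1 : (m - 2*r).choose (j - r) = 0 := Nat.choose_eq_zero_of_lt (by omega)
    have z2 : (m - j).choose r = 0 := Nat.choose_eq_zero_of_lt (by omega)
    rw [z1, z2]; simp

-- Vandermonde
lemma aux2 (a b : ℕ) :
    ∑ r ∈ range (b+1), (a+1).choose (r+1) * b.choose r = (a+1+b).choose (b+1) := by
  conv_rhs => rw [Nat.add_choose_eq, Finset.Nat.sum_antidiagonal_eq_sum_range_succ_mk,
    Finset.sum_range_succ']
  have : b.choose (b+1-0) = 0 := Nat.choose_eq_zero_of_lt (by omega)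
  rw [this, mul_zero, add_zero]
  refine Finset.sum_congr rfl fun r hr => ?_
  have hrb : r ≤ b := by simpa using Nat.lt_succ_iff.mp (mem_range.mp hr)
  have : b + 1 - (r + 1) = b - r := by omega
  rw [this, Nat.choose_symm hrb]
lemma key (m j : ℕ) (hj : j ≤ m) :
    ∑ r ∈ Finset.range (m/2+1),
      (1/((r:ℚ)+1) * ((2*r).choose r : ℚ) * ((m.choose (2*r) : ℕ) : ℚ)) *
        (if r ≤ j then (((m - 2*r).choose (j - r) : ℕ) : ℚ) else 0)
    = 1/((m:ℚ)+1) * (((m+1).choose (j+1) : ℕ) : ℚ) * (((m+1).choose j : ℕ) : ℚ) := by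
  have step1 : ∀ r ∈ Finset.range (m/2+1),
      (1/((r:ℚ)+1) * ((2*r).choose r : ℚ) * ((m.choose (2*r) : ℕ) : ℚ)) *
        (if r ≤ j then (((m - 2*r).choose (j - r) : ℕ) : ℚ) else 0)
      = (m.choose j : ℚ) * (((j+1).choose (r+1) : ℕ) : ℚ) * (((m - j).choose r : ℕ) : ℚ)
          / ((j:ℚ)+1) := by
    intro r hr
    have h2r : 2*r ≤ m := by have := Finset.mem_range.mp hr; omega
    by_cases hrj : r ≤ j
    · rw [if_pos hrj]
      have hc : ((j:ℚ)+1) * (j.choose r : ℚ) = (((j+1).choose (r+1) : ℕ) : ℚ) * ((r:ℚ)+1) := by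
        exact_mod_cast congrArg (Nat.cast (R := ℚ)) (Nat.add_one_mul_choose_eq j r)
      have h1 := aux1 m j r h2r hrj hj
      have hr1 : ((r:ℚ)+1) ≠ 0 := by positivity
      have hj1 : ((j:ℚ)+1) ≠ 0 := by positivity
      field_simp
      linear_combination ((m.choose j : ℚ) * (((m-j).choose r : ℕ) : ℚ)) * hc
        + (((j:ℚ)+1)) * h1
    · rw [if_neg hrj, mul_zero]
      have : (j+1).choose (r+1) = 0 := Nat.choose_eq_zero_of_lt (by omega)
      rw [this]; push_cast; ring
  rw [Finset.sum_congr rfl step1]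
  have step2 : ∑ r ∈ Finset.range (m/2+1),
      (m.choose j : ℚ) * (((j+1).choose (r+1) : ℕ) : ℚ) * (((m - j).choose r : ℕ) : ℚ)
          / ((j:ℚ)+1)
      = ∑ r ∈ Finset.range (m+1),
      (m.choose j : ℚ) * (((j+1).choose (r+1) : ℕ) : ℚ) * (((m - j).choose r : ℕ) : ℚ)
          / ((j:ℚ)+1) := by
    refine Finset.sum_subset (by intro x hx; simp at hx ⊢; omega) ?_
    intro r hr hr'
    have h2r : m < 2*r := by simp at hr hr'; omega
    by_cases hrj : r ≤ j
    · have : (m - j).choose r = 0 := Nat.choose_eq_zero_of_lt (by omega)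
      rw [this]; push_cast; ring
    · have : (j+1).choose (r+1) = 0 := Nat.choose_eq_zero_of_lt (by omega)
      rw [this]; push_cast; ring
  rw [step2]
  have hsum : ∑ r ∈ Finset.range (m+1), (j+1).choose (r+1) * (m - j).choose r
      = (m+1).choose j := by
    have e1 : ∑ r ∈ Finset.range (m+1), (j+1).choose (r+1) * (m - j).choose r
        = ∑ r ∈ Finset.range ((m-j)+1), (j+1).choose (r+1) * (m - j).choose r := by
      symm
      refine Finset.sum_subset (by intro x hx; simp at hx ⊢; omega) ?_
      intro r hr hr'
      have : (m - j).choose r = 0 := Nat.choose_eq_zero_of_lt (by simp at hr hr'; omega)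
      rw [this, mul_zero]
    rw [e1, aux2 j (m-j)]
    have e2 : j + 1 + (m - j) = m + 1 := by omega
    have e3 : m - j + 1 = (m+1) - j := by omega
    rw [e2, e3, Nat.choose_symm (by omega)]
  have : ∑ r ∈ Finset.range (m+1),
      (m.choose j : ℚ) * (((j+1).choose (r+1) : ℕ) : ℚ) * (((m - j).choose r : ℕ) : ℚ)
          / ((j:ℚ)+1)
      = (m.choose j : ℚ) / ((j:ℚ)+1) *
          ((∑ r ∈ Finset.range (m+1), (j+1).choose (r+1) * (m - j).choose r : ℕ) : ℚ) := by
    push_cast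
    rw [Finset.mul_sum]
    exact Finset.sum_congr rfl fun r _ => by ring
  rw [this, hsum]
  have hc : ((m:ℚ)+1) * (m.choose j : ℚ) = (((m+1).choose (j+1) : ℕ) : ℚ) * ((j:ℚ)+1) := by
    exact_mod_cast congrArg (Nat.cast (R := ℚ)) (Nat.add_one_mul_choose_eq m j)
  have hj1 : ((j:ℚ)+1) ≠ 0 := by positivity
  have hm1 : ((m:ℚ)+1) ≠ 0 := by positivity
  field_simp
  linear_combination (((m+1).choose j : ℕ) : ℚ) * hc

/-- The γ-expansion of the Narayana polynomial (the `h`-polynomial of the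
`(n-1)`-dimensional associahedron):
`∑_{k=1}^n (1/n) C(n,k) C(n,k−1) t^{k−1}
  = ∑_{r=0}^{⌊(n−1)/2⌋} C_r C(n−1,2r) t^r (1+t)^{n−1−2r}`,
where `C_r = (1/(r+1)) C(2r,r)` is the `r`-th Catalan number. -/
theorem associahedron_gamma (n : ℕ) (hn : 1 ≤ n) :
    ∑ k ∈ Finset.Icc 1 n,
        C ((1 / (n : ℚ)) * (n.choose k : ℚ) * (n.choose (k - 1) : ℚ)) *
          (X : Polynomial ℚ) ^ (k - 1)
      = ∑ r ∈ Finset.range ((n - 1) / 2 + 1),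
          C ((1 / ((r : ℚ) + 1)) * ((2 * r).choose r : ℚ) *
              ((n - 1).choose (2 * r) : ℚ)) *
            (X : Polynomial ℚ) ^ r * (1 + X) ^ (n - 1 - 2 * r) := by
  obtain ⟨m, rfl⟩ : ∃ m, n = m + 1 := ⟨n - 1, by omega⟩
  simp only [Nat.add_sub_cancel]
  apply Polynomial.ext
  intro j
  rw [Polynomial.finset_sum_coeff, Polynomial.finset_sum_coeff]
  have lhs_term : ∀ k, (C ((1 / ((m+1 : ℕ) : ℚ)) * ((m+1).choose k : ℚ) *
        ((m+1).choose (k - 1) : ℚ)) * (X : Polynomial ℚ) ^ (k - 1)).coeff j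
      = (1 / ((m+1 : ℕ) : ℚ)) * ((m+1).choose k : ℚ) * ((m+1).choose (k - 1) : ℚ) *
          (if j = k - 1 then 1 else 0) := by
    intro k
    rw [coeff_C_mul, coeff_X_pow]
  have rhs_term : ∀ r : ℕ, (C ((1 / ((r : ℚ) + 1)) * ((2 * r).choose r : ℚ) *
        (m.choose (2 * r) : ℚ)) * (X : Polynomial ℚ) ^ r * (1 + X) ^ (m - 2 * r)).coeff j
      = ((1 / ((r : ℚ) + 1)) * ((2 * r).choose r : ℚ) * (m.choose (2 * r) : ℚ)) *
          (if r ≤ j then (((m - 2 * r).choose (j - r) : ℕ) : ℚ) else 0) := by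
    intro r
    have : C ((1 / ((r : ℚ) + 1)) * ((2 * r).choose r : ℚ) * (m.choose (2 * r) : ℚ)) *
        (X : Polynomial ℚ) ^ r * (1 + X) ^ (m - 2 * r)
        = C ((1 / ((r : ℚ) + 1)) * ((2 * r).choose r : ℚ) * (m.choose (2 * r) : ℚ)) *
          ((1 + X) ^ (m - 2 * r) * (X : Polynomial ℚ) ^ r) := by ring
    rw [this, coeff_C_mul, coeff_mul_X_pow']
    by_cases hrj : r ≤ j
    · rw [if_pos hrj, if_pos hrj, coeff_one_add_X_pow]
    · rw [if_neg hrj, if_neg hrj]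
  simp only [lhs_term, rhs_term]
  by_cases hj : j ≤ m
  · rw [Finset.sum_eq_single (j+1)]
    · simp only [Nat.add_sub_cancel, if_pos rfl, mul_one]
      rw [key m j hj]; push_cast; simp
    · intro k hk hkj
      have hk1 : 1 ≤ k := (Finset.mem_Icc.mp hk).1
      rw [if_neg (by omega), mul_zero]
    · intro h
      exact absurd (Finset.mem_Icc.mpr ⟨by omega, by omega⟩) h
  · rw [Finset.sum_eq_zero, Finset.sum_eq_zero]
    · intro r hr
      have h2r : 2*r ≤ m := by have := mem_range.mp hr; omega
      by_cases hrj : r ≤ j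
      · rw [if_pos hrj]
        have : (m - 2*r).choose (j - r) = 0 := Nat.choose_eq_zero_of_lt (by omega)
        rw [this]; push_cast; ring
      · rw [if_neg hrj, mul_zero]
    · intro k hk
      have := Finset.mem_Icc.mp hk
      rw [if_neg (by omega), mul_zero]
end

section
/- For every n ≥ 0, in the polynomial ring ℤ[t] one has ∑_{k=0}^{n} binom(n,k)^2 · t^k = ∑_{r=0}^{⌊n/2⌋} (n! / (r! · r! · (n−2r)!)) · t^r · (1+t)^{n−2r}. (Equivalently, the γ-polynomial of the n-dimensional cyclohedron, whose h-polynomial is ∑_k binom(n,k)^2 t^k, is ∑_r multinomial(n; r, r, n−2r) t^r.) -/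
open Polynomial Finset

lemma multi_eq_choose (n r : ℕ) (h : 2 * r ≤ n) :
    n.factorial / (r.factorial * r.factorial * (n - 2 * r).factorial)
      = n.choose (2 * r) * (2 * r).choose r := by
  have h1 : n.choose (2*r) * (2*r).factorial * (n-2*r).factorial = n.factorial :=
    Nat.choose_mul_factorial_mul_factorial h
  have h2 : (2*r).choose r * r.factorial * r.factorial = (2*r).factorial := by
    have := Nat.choose_mul_factorial_mul_factorial (show r ≤ 2*r by omega)
    have e : 2*r - r = r := by omega
    rwa [e] at this
  have key : n.factorial =
      (n.choose (2*r) * (2*r).choose r) * (r.factorial * r.factorial * (n - 2*r).factorial) := by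
    rw [← h1, ← h2]; ring
  rw [key, Nat.mul_div_cancel]
  positivity

lemma vander (n k : ℕ) (hk : k ≤ n) :
    ∑ r ∈ range (n / 2 + 1), k.choose r * (n - k).choose r = n.choose k := by
  have h := Nat.add_choose_eq k (n - k) (n - k)
  rw [Finset.Nat.sum_antidiagonal_eq_sum_range_succ
        (fun i j => k.choose i * (n - k).choose j)] at h
  have hkn : k + (n - k) = n := by omega
  rw [hkn, Nat.choose_symm hk] at h
  have h2 : ∑ i ∈ range (n - k + 1), k.choose i * (n - k).choose ((n - k) - i)
      = ∑ i ∈ range (n - k + 1), k.choose i * (n - k).choose i := by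
    refine Finset.sum_congr rfl fun i hi => ?_
    rw [mem_range] at hi
    rw [Nat.choose_symm (by omega)]
  have ext : ∀ m : ℕ, m ≤ n → (∀ r, m < r → k < r ∨ n - k < r) →
      ∑ r ∈ range (m + 1), k.choose r * (n - k).choose r
      = ∑ r ∈ range (n + 1), k.choose r * (n - k).choose r := by
    intro m hm hz
    refine Finset.sum_subset (Finset.range_subset_range.2 (by omega)) fun r _ hr => ?_
    rw [mem_range, not_lt] at hr
    rcases hz r (by omega) with h' | h' <;>
      simp [Nat.choose_eq_zero_of_lt h']
  rw [ext (n / 2) (by omega) (fun r hr => by omega),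
    ← ext (n - k) (by omega) (fun r hr => by omega), ← h2, ← h]

lemma term_eq (n k r : ℕ) (h2r : 2 * r ≤ n) :
    n.choose (2 * r) * (2 * r).choose r *
        (if r ≤ k then (n - 2 * r).choose (k - r) else 0)
      = n.choose k * (k.choose r * (n - k).choose r) := by
  by_cases hrk : r ≤ k
  · rw [if_pos hrk]
    by_cases hkn : k ≤ n
    · by_cases hrnk : r ≤ n - k
      · have D_pos : 0 < r.factorial * r.factorial * (k - r).factorial * (n - k - r).factorial :=
          by positivity
        refine Nat.eq_of_mul_eq_mul_right D_pos ?_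
        have e1 : (2*r).choose r * r.factorial * r.factorial = (2*r).factorial := by
          have := Nat.choose_mul_factorial_mul_factorial (show r ≤ 2*r by omega)
          have e : 2*r - r = r := by omega
          rwa [e] at this
        have e2 : (n - 2*r).choose (k - r) * (k - r).factorial * (n - k - r).factorial
            = (n - 2*r).factorial := by
          have := Nat.choose_mul_factorial_mul_factorial (show k - r ≤ n - 2*r by omega)
          have e : n - 2*r - (k - r) = n - k - r := by omega
          rwa [e] at this
        have e3 : n.choose (2*r) * (2*r).factorial * (n - 2*r).factorial = n.factorial :=
          Nat.choose_mul_factorial_mul_factorial h2r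
        have f1 : k.choose r * r.factorial * (k - r).factorial = k.factorial :=
          Nat.choose_mul_factorial_mul_factorial hrk
        have f2 : (n - k).choose r * r.factorial * (n - k - r).factorial
            = (n - k).factorial :=
          Nat.choose_mul_factorial_mul_factorial hrnk
        have f3 : n.choose k * k.factorial * (n - k).factorial = n.factorial :=
          Nat.choose_mul_factorial_mul_factorial hkn
        calc n.choose (2*r) * (2*r).choose r * (n - 2*r).choose (k - r) *
              (r.factorial * r.factorial * (k - r).factorial * (n - k - r).factorial)
            = n.choose (2*r) * ((2*r).choose r * r.factorial * r.factorial) *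
              ((n - 2*r).choose (k - r) * (k - r).factorial * (n - k - r).factorial) := by ring
          _ = n.factorial := by rw [e1, e2]; exact e3
          _ = (n.choose k * k.factorial * (n - k).factorial) := f3.symm
          _ = n.choose k * (k.choose r * r.factorial * (k - r).factorial) *
              ((n - k).choose r * r.factorial * (n - k - r).factorial) := by rw [f1, f2]
          _ = n.choose k * (k.choose r * (n - k).choose r) *
              (r.factorial * r.factorial * (k - r).factorial * (n - k - r).factorial) := by ring
      · rw [Nat.choose_eq_zero_of_lt (show n - k < r by omega),
          Nat.choose_eq_zero_of_lt (show n - 2*r < k - r by omega)]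
        ring
    · rw [Nat.choose_eq_zero_of_lt (show n < k by omega),
        Nat.choose_eq_zero_of_lt (show n - 2*r < k - r by omega)]
      ring
  · rw [if_neg hrk, Nat.choose_eq_zero_of_lt (show k < r by omega)]
    ring

lemma coeff_id (n m : ℕ) :
    ∑ r ∈ range (n / 2 + 1),
        n.choose (2 * r) * (2 * r).choose r *
          (if r ≤ m then (n - 2 * r).choose (m - r) else 0)
      = n.choose m ^ 2 := by
  have step : ∑ r ∈ range (n / 2 + 1),
      n.choose (2 * r) * (2 * r).choose r *
        (if r ≤ m then (n - 2 * r).choose (m - r) else 0)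
      = ∑ r ∈ range (n / 2 + 1), n.choose m * (m.choose r * (n - m).choose r) := by
    refine Finset.sum_congr rfl fun r hr => ?_
    rw [mem_range] at hr
    exact term_eq n m r (by omega)
  rw [step, ← Finset.mul_sum]
  by_cases hmn : m ≤ n
  · rw [vander n m hmn, sq]
  · rw [Nat.choose_eq_zero_of_lt (show n < m by omega)]
    ring

/-- The γ-expansion of the `h`-polynomial of the `n`-dimensional cyclohedron:
`∑_{k=0}^n C(n,k)^2 t^k
  = ∑_{r=0}^{⌊n/2⌋} (n! / (r! r! (n−2r)!)) t^r (1+t)^{n−2r}`. -/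
theorem cyclohedron_gamma (n : ℕ) :
    ∑ k ∈ Finset.range (n + 1),
        C ((n.choose k : ℤ) ^ 2) * (X : Polynomial ℤ) ^ k
      = ∑ r ∈ Finset.range (n / 2 + 1),
          C (((n.factorial / (r.factorial * r.factorial * (n - 2 * r).factorial) : ℕ) : ℤ)) *
            (X : Polynomial ℤ) ^ r * (1 + X) ^ (n - 2 * r) := by
  ext m
  rw [finset_sum_coeff, finset_sum_coeff]
  have lhs_eq : ∑ k ∈ Finset.range (n + 1),
      (C ((n.choose k : ℤ) ^ 2) * (X : Polynomial ℤ) ^ k).coeff m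
      = ((n.choose m : ℤ) ^ 2) := by
    simp_rw [coeff_C_mul, coeff_X_pow, mul_ite, mul_one, mul_zero]
    rw [Finset.sum_ite_eq (Finset.range (n + 1)) m (fun k => ((n.choose k : ℤ) ^ 2))]
    split_ifs with h
    · rfl
    · rw [mem_range, not_lt] at h
      rw [Nat.choose_eq_zero_of_lt (by omega)]
      norm_num
  rw [lhs_eq]
  have rhs_eq : ∀ r ∈ Finset.range (n / 2 + 1),
      (C (((n.factorial / (r.factorial * r.factorial * (n - 2 * r).factorial) : ℕ) : ℤ)) *
          (X : Polynomial ℤ) ^ r * (1 + X) ^ (n - 2 * r)).coeff m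
      = ((n.choose (2 * r) * (2 * r).choose r : ℕ) : ℤ) *
          (if r ≤ m then (((n - 2 * r).choose (m - r) : ℕ) : ℤ) else 0) := by
    intro r hr
    rw [mem_range] at hr
    rw [multi_eq_choose n r (by omega)]
    rw [mul_right_comm, coeff_mul_X_pow', coeff_C_mul, coeff_one_add_X_pow]
    split_ifs with h <;> simp
  rw [Finset.sum_congr rfl rhs_eq]
  have h := congrArg (fun x : ℕ => (x : ℤ)) (coeff_id n m)
  push_cast at h
  exact h.symm
end
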